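/- arXiv:math/0701001 — 8 statements merged into one kernel-verified Lean document; each statement's English description precedes it below -/
import Mathlib

section
/- Let f(x_1,…,x_n) = u_1x_1 + ⋯ + u_nx_n and g(x_1,…,x_n) = v_1x_1 + ⋯ + v_nx_n be linear forms with integer coefficients. Suppose A and C are finite sets of integers such that |f(A)| > |g(A)|, |f(C)| = |g(C)|, and |C| > 1. Then there exist sequences {A_i} and {C_i} of finite sets of integers such that |C_i| → ∞ as i → ∞, the ratio |f(A_i)|/|g(A_i)| tends to infinity as i → ∞, and |f(C_i)| = |g(C_i)| for all i. -/
def linFormImage (n : ℕ) (u : Fin n → ℤ) (A : Finset ℤ) : Finset ℤ :=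
  (Fintype.piFinset fun _ : Fin n => A).image fun a => ∑ i, u i * a i

namespace Stmt0Aux

def combine (l : ℤ) (X Y : Finset ℤ) : Finset ℤ :=
  (X ×ˢ Y).image fun p => p.1 + l * p.2

lemma mem_combine {l : ℤ} {X Y : Finset ℤ} {z : ℤ} :
    z ∈ combine l X Y ↔ ∃ x ∈ X, ∃ y ∈ Y, z = x + l * y := by
  simp only [combine, Finset.mem_image, Finset.mem_product, Prod.exists]
  constructor
  · rintro ⟨x, y, ⟨hx, hy⟩, rfl⟩; exact ⟨x, hx, y, hy, rfl⟩
  · rintro ⟨x, hx, y, hy, rfl⟩; exact ⟨x, y, ⟨hx, hy⟩, rfl⟩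

lemma linFormImage_combine (n : ℕ) (u : Fin n → ℤ) (l : ℤ) (X Y : Finset ℤ) :
    linFormImage n u (combine l X Y)
      = combine l (linFormImage n u X) (linFormImage n u Y) := by
  ext z
  simp only [linFormImage, Finset.mem_image, Fintype.mem_piFinset, mem_combine]
  constructor
  · rintro ⟨c, hc, rfl⟩
    choose a ha b hb he using hc
    refine ⟨∑ i, u i * a i, ⟨a, ha, rfl⟩, ∑ i, u i * b i, ⟨b, hb, rfl⟩, ?_⟩
    rw [Finset.mul_sum, ← Finset.sum_add_distrib]
    exact Finset.sum_congr rfl fun i _ => by rw [he i]; ring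
  · rintro ⟨s, ⟨a, ha, rfl⟩, t, ⟨b, hb, rfl⟩, rfl⟩
    refine ⟨fun i => a i + l * b i, fun i => ⟨a i, ha i, b i, hb i, rfl⟩, ?_⟩
    rw [Finset.mul_sum, ← Finset.sum_add_distrib]
    exact Finset.sum_congr rfl fun i _ => by simp only []; ring

lemma card_combine {l : ℤ} {X Y : Finset ℤ}
    (h : ∀ x ∈ X, ∀ x' ∈ X, |x - x'| < l) :
    (combine l X Y).card = X.card * Y.card := by
  rw [combine, Finset.card_image_of_injOn, Finset.card_product]
  rintro ⟨x1, y1⟩ h1 ⟨x2, y2⟩ h2 he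
  simp only [Finset.mem_coe, Finset.mem_product] at h1 h2
  simp only at he
  have hl : 0 < l := lt_of_le_of_lt (abs_nonneg _) (h x1 h1.1 x1 h1.1)
  have hxx : |x1 - x2| < l := h x1 h1.1 x2 h2.1
  have hy : y1 = y2 := by
    by_contra hy
    have h1' : (1 : ℤ) ≤ |y1 - y2| := Int.one_le_abs (sub_ne_zero.mpr hy)
    have : l * 1 ≤ |l| * |y1 - y2| :=
      mul_le_mul (le_abs_self l) h1' (by norm_num) (abs_nonneg _)
    rw [← abs_mul] at this
    have he2 : l * (y1 - y2) = x2 - x1 := by linarith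
    rw [he2] at this
    have : |x1 - x2| = |x2 - x1| := abs_sub_comm _ _
    omega
  have hx : x1 = x2 := by subst hy; linarith
  simp [hx, hy]

def bnd (n : ℕ) (u v : Fin n → ℤ) (X : Finset ℤ) : ℤ :=
  2 * (((X ∪ linFormImage n u X ∪ linFormImage n v X).sup Int.natAbs : ℕ) : ℤ) + 1

lemma bnd_spec (n : ℕ) (u v : Fin n → ℤ) (X : Finset ℤ) {x x' : ℤ}
    (hx : x ∈ X ∪ linFormImage n u X ∪ linFormImage n v X)
    (hx' : x' ∈ X ∪ linFormImage n u X ∪ linFormImage n v X) :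
    |x - x'| < bnd n u v X := by
  set S := X ∪ linFormImage n u X ∪ linFormImage n v X with hS
  have h1 : (x.natAbs : ℤ) ≤ ((S.sup Int.natAbs : ℕ) : ℤ) := by
    exact_mod_cast Finset.le_sup hx
  have h2 : (x'.natAbs : ℤ) ≤ ((S.sup Int.natAbs : ℕ) : ℤ) := by
    exact_mod_cast Finset.le_sup hx'
  have hx1 : |x| ≤ ((S.sup Int.natAbs : ℕ) : ℤ) := by rwa [Int.abs_eq_natAbs]
  have hx2 : |x'| ≤ ((S.sup Int.natAbs : ℕ) : ℤ) := by rwa [Int.abs_eq_natAbs]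
  have := abs_sub_abs_le_abs_sub x x'
  have h3 : |x - x'| ≤ |x| + |x'| := abs_sub x x'
  rw [bnd, ← hS]
  omega

def step (n : ℕ) (u v : Fin n → ℤ) (B X : Finset ℤ) : Finset ℤ :=
  combine (bnd n u v X) X B

lemma card_step_u (n : ℕ) (u v : Fin n → ℤ) (B X : Finset ℤ) :
    (linFormImage n u (step n u v B X)).card
      = (linFormImage n u X).card * (linFormImage n u B).card := by
  rw [step, linFormImage_combine, card_combine]
  intro x hx x' hx'
  exact bnd_spec n u v X (by simp [hx]) (by simp [hx'])

lemma card_step_v (n : ℕ) (u v : Fin n → ℤ) (B X : Finset ℤ) :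
    (linFormImage n v (step n u v B X)).card
      = (linFormImage n v X).card * (linFormImage n v B).card := by
  rw [step, linFormImage_combine, card_combine]
  intro x hx x' hx'
  exact bnd_spec n u v X (by simp [hx]) (by simp [hx'])

lemma card_step (n : ℕ) (u v : Fin n → ℤ) (B X : Finset ℤ) :
    (step n u v B X).card = X.card * B.card := by
  rw [step, card_combine]
  intro x hx x' hx'
  exact bnd_spec n u v X (by simp [hx]) (by simp [hx'])

end Stmt0Aux

theorem stmt_0 (n : ℕ) (u v : Fin n → ℤ) (A C : Finset ℤ)
    (hA : (linFormImage n u A).card > (linFormImage n v A).card)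
    (hC : (linFormImage n u C).card = (linFormImage n v C).card)
    (hC1 : 1 < C.card) :
    ∃ (As Cs : ℕ → Finset ℤ),
      Filter.Tendsto
        (fun i => ((linFormImage n u (As i)).card : ℝ) / ((linFormImage n v (As i)).card))
        Filter.atTop Filter.atTop ∧
      Filter.Tendsto (fun i => (Cs i).card) Filter.atTop Filter.atTop ∧
      ∀ i, (linFormImage n u (Cs i)).card = (linFormImage n v (Cs i)).card := by
  classical
  set p := (linFormImage n u A).card with hp
  set q := (linFormImage n v A).card with hqdef
  have hq : 0 < q := by
    rcases Nat.eq_zero_or_pos q with h | h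
    · exfalso
      have h1 : linFormImage n v A = ∅ := Finset.card_eq_zero.mp h
      have h2 : (Fintype.piFinset fun _ : Fin n => A) = ∅ :=
        Finset.image_eq_empty.mp h1
      have h3 : linFormImage n u A = ∅ := by
        rw [linFormImage, h2, Finset.image_empty]
      rw [hp, h3, Finset.card_empty] at hA
      omega
    · exact h
  refine ⟨fun i => (Stmt0Aux.step n u v A)^[i] A, fun i => (Stmt0Aux.step n u v C)^[i] C, ?_, ?_, ?_⟩
  · have hfA : ∀ i, (linFormImage n u ((Stmt0Aux.step n u v A)^[i] A)).card = p ^ (i + 1) := by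
      intro i
      induction i with
      | zero => simp [pow_one, hp]
      | succ i ih =>
        rw [Function.iterate_succ_apply', Stmt0Aux.card_step_u, ih]
        ring
    have hgA : ∀ i, (linFormImage n v ((Stmt0Aux.step n u v A)^[i] A)).card = q ^ (i + 1) := by
      intro i
      induction i with
      | zero => simp [pow_one, hqdef]
      | succ i ih =>
        rw [Function.iterate_succ_apply', Stmt0Aux.card_step_v, ih]
        ring
    have hr : 1 < (p : ℝ) / q := by
      rw [lt_div_iff₀ (by exact_mod_cast hq)]
      rw [one_mul]
      exact_mod_cast hA
    have ht := (tendsto_pow_atTop_atTop_of_one_lt hr).comp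
      (Filter.tendsto_add_atTop_nat 1)
    refine ht.congr fun i => ?_
    simp only [Function.comp_apply]
    rw [hfA i, hgA i]
    push_cast
    rw [div_pow]
  · have hcC : ∀ i, ((Stmt0Aux.step n u v C)^[i] C).card = C.card ^ (i + 1) := by
      intro i
      induction i with
      | zero => simp [pow_one]
      | succ i ih =>
        rw [Function.iterate_succ_apply', Stmt0Aux.card_step, ih]
        ring
    refine Filter.tendsto_atTop_mono (fun i => ?_) Filter.tendsto_id
    rw [hcC i]
    calc i ≤ 2 ^ i := (Nat.lt_two_pow_self (n := i)).le
      _ ≤ 2 ^ (i + 1) := Nat.pow_le_pow_right (by norm_num) (by omega)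
      _ ≤ C.card ^ (i + 1) := Nat.pow_le_pow_left hC1 _
  · intro i
    have hfC : ∀ i, (linFormImage n u ((Stmt0Aux.step n u v C)^[i] C)).card
        = (linFormImage n u C).card ^ (i + 1) := by
      intro i
      induction i with
      | zero => simp [pow_one]
      | succ i ih =>
        rw [Function.iterate_succ_apply', Stmt0Aux.card_step_u, ih]
        ring
    have hgC : ∀ i, (linFormImage n v ((Stmt0Aux.step n u v C)^[i] C)).card
        = (linFormImage n v C).card ^ (i + 1) := by
      intro i
      induction i with
      | zero => simp [pow_one]
      | succ i ih =>
        rw [Function.iterate_succ_apply', Stmt0Aux.card_step_v, ih]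
        ring
    rw [hfC i, hgC i, hC]
end

section
/- Let f(x_1,…,x_n) = u_1x_1 + ⋯ + u_nx_n be a linear form with integer coefficients and let A be a nonempty finite set of integers. Let M be an integer with M > 2·max{|s| : s ∈ A ∪ f(A)}, and set A_M = {a + M·a' : a, a' ∈ A}. Then |A_M| = |A|² and |f(A_M)| = |f(A)|². -/
lemma key_card (M : ℤ) (hM : 0 < M) (S : Finset ℤ) (hS : ∀ s ∈ S, 2 * |s| < M) :
    ((S ×ˢ S).image fun p => p.1 + M * p.2).card = S.card ^ 2 := by
  rw [Finset.card_image_of_injOn, Finset.card_product, sq]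
  intro p hp q hq h
  simp only [Finset.mem_coe, Finset.mem_product] at hp hq
  have h' : p.1 + M * p.2 = q.1 + M * q.2 := h
  have h1 := hS p.1 hp.1
  have h2 := hS q.1 hq.1
  have hlt : |p.1 - q.1| < M := by
    rcases abs_cases p.1 with ⟨e1, _⟩ | ⟨e1, _⟩ <;>
      rcases abs_cases q.1 with ⟨e2, _⟩ | ⟨e2, _⟩ <;>
      rcases abs_cases (p.1 - q.1) with ⟨e3, _⟩ | ⟨e3, _⟩ <;> linarith
  have h22 : p.2 = q.2 := by
    by_contra hne
    have hd : p.1 - q.1 = M * (q.2 - p.2) := by nlinarith [h']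
    have hge : (1 : ℤ) ≤ |q.2 - p.2| := Int.one_le_abs (sub_ne_zero.mpr fun h => hne h.symm)
    have : M ≤ |p.1 - q.1| := by
      rw [hd, abs_mul, abs_of_pos hM]
      nlinarith
    linarith
  have h11 : p.1 = q.1 := by rw [h22] at h'; linarith
  exact Prod.ext h11 h22

lemma lin_image_eq (n : ℕ) (u : Fin n → ℤ) (A : Finset ℤ) (M : ℤ) :
    linFormImage n u ((A ×ˢ A).image fun p => p.1 + M * p.2)
      = ((linFormImage n u A) ×ˢ (linFormImage n u A)).image fun p => p.1 + M * p.2 := by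
  ext x
  simp only [linFormImage, Finset.mem_image, Fintype.mem_piFinset, Prod.exists,
    Finset.mem_product]
  constructor
  · rintro ⟨g, hg, rfl⟩
    have h : ∀ i, ∃ a ∈ A, ∃ b ∈ A, a + M * b = g i := by
      intro i
      have := hg i
      obtain ⟨a, b, ⟨ha, hb⟩, h⟩ := this
      exact ⟨a, ha, b, hb, h⟩
    choose a ha b hb hab using h
    refine ⟨∑ i, u i * a i, ∑ i, u i * b i, ⟨⟨a, fun i => ha i, rfl⟩, ⟨b, fun i => hb i, rfl⟩⟩, ?_⟩
    calc (∑ i, u i * a i) + M * ∑ i, u i * b i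
        = ∑ i, (u i * a i + M * (u i * b i)) := by
          rw [Finset.mul_sum, Finset.sum_add_distrib]
      _ = ∑ i, u i * g i := Finset.sum_congr rfl fun i _ => by rw [← hab i]; ring
  · rintro ⟨s, t, ⟨⟨a, ha, rfl⟩, ⟨b, hb, rfl⟩⟩, rfl⟩
    refine ⟨fun i => a i + M * b i, fun i => ?_, ?_⟩
    · exact ⟨a i, b i, ⟨ha i, hb i⟩, rfl⟩
    · calc ∑ i, u i * (a i + M * b i)
          = ∑ i, (u i * a i + M * (u i * b i)) := Finset.sum_congr rfl fun i _ => by ring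
        _ = (∑ i, u i * a i) + M * ∑ i, u i * b i := by
            rw [Finset.mul_sum, Finset.sum_add_distrib]

theorem stmt_1 (n : ℕ) (u : Fin n → ℤ) (A : Finset ℤ) (hA : A.Nonempty) (M : ℤ)
    (hM : ∀ s ∈ A ∪ linFormImage n u A, 2 * |s| < M)
    (AM : Finset ℤ) (hAM : AM = (A ×ˢ A).image fun p => p.1 + M * p.2) :
    AM.card = A.card ^ 2 ∧
    (linFormImage n u AM).card = (linFormImage n u A).card ^ 2 := by
  obtain ⟨a0, ha0⟩ := hA
  have hMpos : 0 < M := lt_of_le_of_lt (by positivity) (hM a0 (Finset.mem_union_left _ ha0))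
  subst hAM
  constructor
  · exact key_card M hMpos A fun s hs => hM s (Finset.mem_union_left _ hs)
  · rw [lin_image_eq]
    exact key_card M hMpos _ fun s hs => hM s (Finset.mem_union_right _ hs)
end

section
/- Let f(x,y) = ux + vy be a binary linear form with integer coefficients satisfying u > |v| ≥ 1, gcd(u,v) = 1, and u ≥ 3. If A is a set of integers with |A| = 3, then |f(A)| = 8 or |f(A)| = 9, and |f(A)| = 8 if and only if A is affinely equivalent to one of the two sets {0, |v|, u} and {0, |v|, u + |v|}. -/
open Finset

/-- The image of a finite set `A` of integers under the binary linear form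
`f(x,y) = u x + v y`. -/
def binFormImage (u v : ℤ) (A : Finset ℤ) : Finset ℤ :=
  (A ×ˢ A).image fun p => u * p.1 + v * p.2

/-- Two finite sets of integers are affinely equivalent if there exist rational
numbers `r ≠ 0` and `s` such that `B = {r·a + s : a ∈ A}`. -/
def AffinelyEquivalent (A B : Finset ℤ) : Prop :=
  ∃ r s : ℚ, r ≠ 0 ∧ B.image (fun b : ℤ => (b : ℚ)) = A.image (fun a : ℤ => r * (a : ℚ) + s)


open Finset

lemma exists_sorted (A : Finset ℤ) (hA : A.card = 3) :
    ∃ a b c : ℤ, a < b ∧ b < c ∧ A = {a, b, c} := by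
  obtain ⟨x, y, z, hxy, hxz, hyz, rfl⟩ := Finset.card_eq_three.mp hA
  have perm : ∀ p q r : ℤ, (p = x ∨ p = y ∨ p = z) → (q = x ∨ q = y ∨ q = z) →
      (r = x ∨ r = y ∨ r = z) → p ≠ q → p ≠ r → q ≠ r →
      ({x, y, z} : Finset ℤ) = {p, q, r} := by
    intro p q r hp hq hr h1 h2 h3
    ext t; simp only [Finset.mem_insert, Finset.mem_singleton]
    constructor
    · intro ht; rcases ht with rfl|rfl|rfl <;> rcases hp with rfl|rfl|rfl <;>
        rcases hq with rfl|rfl|rfl <;> rcases hr with rfl|rfl|rfl <;> tauto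
    · intro ht; rcases ht with rfl|rfl|rfl <;> tauto
  rcases lt_trichotomy x y with h|h|h
  · rcases lt_trichotomy y z with g|g|g
    · exact ⟨x, y, z, h, g, rfl⟩
    · exact absurd g hyz
    · rcases lt_trichotomy x z with f|f|f
      · exact ⟨x, z, y, f, g, perm x z y (by tauto) (by tauto) (by tauto) hxz (by tauto) (Ne.symm hyz)⟩
      · exact absurd f hxz
      · exact ⟨z, x, y, f, h, perm z x y (by tauto) (by tauto) (by tauto) (Ne.symm hxz) (Ne.symm hyz) hxy⟩
  · exact absurd h hxy
  · rcases lt_trichotomy x z with g|g|g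
    · exact ⟨y, x, z, h, g, perm y x z (by tauto) (by tauto) (by tauto) (Ne.symm hxy) hyz hxz⟩
    · exact absurd g hxz
    · rcases lt_trichotomy y z with f|f|f
      · exact ⟨y, z, x, f, g, perm y z x (by tauto) (by tauto) (by tauto) hyz (Ne.symm hxy) (Ne.symm hxz)⟩
      · exact absurd f hyz
      · exact ⟨z, y, x, f, h, perm z y x (by tauto) (by tauto) (by tauto) (Ne.symm hyz) (Ne.symm hxz) (Ne.symm hxy)⟩

lemma card_image_pred {α β : Type*} [DecidableEq α] [DecidableEq β] (S : Finset α)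
    (f : α → β) (P1 P2 : α) (h1 : P1 ∈ S) (h2 : P2 ∈ S) (hne : P1 ≠ P2) (hf : f P1 = f P2)
    (hinj : ∀ x ∈ S, ∀ y ∈ S, f x = f y → x = y ∨ (x = P1 ∧ y = P2) ∨ (x = P2 ∧ y = P1)) :
    (S.image f).card = S.card - 1 := by
  have himg : S.image f = (S.erase P1).image f := by
    apply Finset.Subset.antisymm
    · intro z hz
      obtain ⟨x, hx, rfl⟩ := Finset.mem_image.mp hz
      by_cases hxP : x = P1
      · exact Finset.mem_image.mpr ⟨P2, Finset.mem_erase.mpr ⟨Ne.symm hne, h2⟩, by rw [hxP, hf]⟩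
      · exact Finset.mem_image.mpr ⟨x, Finset.mem_erase.mpr ⟨hxP, hx⟩, rfl⟩
    · exact Finset.image_subset_image (Finset.erase_subset _ _)
  rw [himg, Finset.card_image_of_injOn, Finset.card_erase_of_mem h1]
  intro x hx y hy hxy
  simp only [Finset.coe_erase, Set.mem_diff, Finset.mem_coe, Set.mem_singleton_iff] at hx hy
  rcases hinj x hx.1 y hy.1 hxy with h | ⟨h, _⟩ | ⟨_, h⟩
  · exact h
  · exact absurd h hx.2
  · exact absurd h hy.2

lemma not_u_eq_two_abs (u v : ℤ) (hv : 1 ≤ |v|) (hgcd : Int.gcd u v = 1) (hu3 : 3 ≤ u) :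
    u ≠ 2 * |v| := by
  intro hu2
  have hdu : |v| ∣ u := ⟨2, by linarith⟩
  have hd1 : |v| ∣ (1 : ℤ) := by
    have hg := Int.dvd_coe_gcd hdu ((abs_dvd v v).mpr dvd_rfl)
    rw [hgcd] at hg; exact_mod_cast hg
  have hle := Int.le_of_dvd one_pos hd1
  have habs1 : |v| = 1 := le_antisymm hle hv
  rw [habs1] at hu2; omega

lemma sorted3 (x1 x2 x3 y1 y2 y3 : ℚ) (hx12 : x1 < x2) (hx23 : x2 < x3)
    (hy12 : y1 < y2) (hy23 : y2 < y3)
    (h : ({x1, x2, x3} : Finset ℚ) = {y1, y2, y3}) : x1 = y1 ∧ x2 = y2 ∧ x3 = y3 := by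
  have hm : ∀ t : ℚ, (t = x1 ∨ t = x2 ∨ t = x3) ↔ (t = y1 ∨ t = y2 ∨ t = y3) := by
    intro t
    have := Finset.ext_iff.mp h t
    simpa using this
  have h1 := (hm x1).mp (by tauto)
  have h2 := (hm x2).mp (by tauto)
  have h3 := (hm x3).mp (by tauto)
  have k1 := (hm y1).mpr (by tauto)
  have k3 := (hm y3).mpr (by tauto)
  have e1 : x1 = y1 := by rcases h1 with e|e|e <;> rcases k1 with f|f|f <;> linarith
  have e3 : x3 = y3 := by rcases h3 with e|e|e <;> rcases k3 with f|f|f <;> linarith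
  have e2 : x2 = y2 := by rcases h2 with e|e|e <;> linarith
  exact ⟨e1, e2, e3⟩

set_option maxHeartbeats 2000000 in

lemma diff_lemma (u w p q D E : ℤ) (hw : 0 < w) (huw : w < u)
    (hp : 0 < p) (hq : 0 < q)
    (hD : D = 0 ∨ D = p ∨ D = q ∨ D = p + q ∨ D = -p ∨ D = -q ∨ D = -(p + q))
    (hE : E = 0 ∨ E = p ∨ E = q ∨ E = p + q ∨ E = -p ∨ E = -q ∨ E = -(p + q))
    (heq : u * D = w * E) :
    (D = 0 ∧ E = 0) ∨
    ((D = p ∧ E = p + q ∨ D = -p ∧ E = -(p + q)) ∧ u * p = w * (p + q)) ∨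
    ((D = q ∧ E = p + q ∨ D = -q ∧ E = -(p + q)) ∧ u * q = w * (p + q)) ∨
    ((D = p ∧ E = q ∨ D = -p ∧ E = -q) ∧ u * p = w * q) ∨
    ((D = q ∧ E = p ∨ D = -q ∧ E = -p) ∧ u * q = w * p) := by
  have hu : 0 < u := hw.trans huw
  rcases hD with rfl|rfl|rfl|rfl|rfl|rfl|rfl <;> rcases hE with rfl|rfl|rfl|rfl|rfl|rfl|rfl <;>
    first
      | exact Or.inl ⟨rfl, rfl⟩
      | exact Or.inr (Or.inl ⟨Or.inl ⟨rfl, rfl⟩, by linarith⟩)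
      | exact Or.inr (Or.inl ⟨Or.inr ⟨rfl, rfl⟩, by linarith⟩)
      | exact Or.inr (Or.inr (Or.inl ⟨Or.inl ⟨rfl, rfl⟩, by linarith⟩))
      | exact Or.inr (Or.inr (Or.inl ⟨Or.inr ⟨rfl, rfl⟩, by linarith⟩))
      | exact Or.inr (Or.inr (Or.inr (Or.inl ⟨Or.inl ⟨rfl, rfl⟩, by linarith⟩)))
      | exact Or.inr (Or.inr (Or.inr (Or.inl ⟨Or.inr ⟨rfl, rfl⟩, by linarith⟩)))
      | exact Or.inr (Or.inr (Or.inr (Or.inr ⟨Or.inl ⟨rfl, rfl⟩, by linarith⟩)))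
      | exact Or.inr (Or.inr (Or.inr (Or.inr ⟨Or.inr ⟨rfl, rfl⟩, by linarith⟩)))
      | (exfalso; nlinarith [mul_pos hw hp, mul_pos hw hq, mul_pos hu hp, mul_pos hu hq,
          mul_lt_mul_of_pos_right huw hp, mul_lt_mul_of_pos_right huw hq,
          mul_lt_mul_of_pos_right huw (add_pos hp hq), mul_pos hu (add_pos hp hq),
          mul_pos hw (add_pos hp hq)])

lemma pinBA (a b c t t' : ℤ) (hab : a < b) (hbc : b < c)
    (ht : t = a ∨ t = b ∨ t = c) (ht' : t' = a ∨ t' = b ∨ t' = c)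
    (hpq : b - a ≠ c - b) (e : t - t' = b - a) : t = b ∧ t' = a := by omega

lemma pinCB (a b c t t' : ℤ) (hab : a < b) (hbc : b < c)
    (ht : t = a ∨ t = b ∨ t = c) (ht' : t' = a ∨ t' = b ∨ t' = c)
    (hpq : b - a ≠ c - b) (e : t - t' = c - b) : t = c ∧ t' = b := by omega

lemma pinCA (a b c t t' : ℤ) (hab : a < b) (hbc : b < c)
    (ht : t = a ∨ t = b ∨ t = c) (ht' : t' = a ∨ t' = b ∨ t' = c)
    (e : t - t' = (b - a) + (c - b)) : t = c ∧ t' = a := by omega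

lemma sorted_master (u v a b c x y x' y' : ℤ) (hv : 1 ≤ |v|) (huv : |v| < u)
    (hgcd : Int.gcd u v = 1) (hu3 : 3 ≤ u) (hab : a < b) (hbc : b < c)
    (hx : x = a ∨ x = b ∨ x = c) (hy : y = a ∨ y = b ∨ y = c)
    (hx' : x' = a ∨ x' = b ∨ x' = c) (hy' : y' = a ∨ y' = b ∨ y' = c)
    (heq : u * x + v * y = u * x' + v * y') :
    (x = x' ∧ y = y') ∨
    (u * (b - a) = |v| * (c - a) ∧
      ((0 < v ∧ ((x = b ∧ y = a ∧ x' = a ∧ y' = c) ∨ (x = a ∧ y = c ∧ x' = b ∧ y' = a))) ∨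
       (v < 0 ∧ ((x = b ∧ y = c ∧ x' = a ∧ y' = a) ∨ (x = a ∧ y = a ∧ x' = b ∧ y' = c))))) ∨
    (u * (c - b) = |v| * (c - a) ∧
      ((0 < v ∧ ((x = c ∧ y = a ∧ x' = b ∧ y' = c) ∨ (x = b ∧ y = c ∧ x' = c ∧ y' = a))) ∨
       (v < 0 ∧ ((x = c ∧ y = c ∧ x' = b ∧ y' = a) ∨ (x = b ∧ y = a ∧ x' = c ∧ y' = c))))) ∨
    (u * (b - a) = |v| * (c - b) ∧
      ((0 < v ∧ ((x = b ∧ y = b ∧ x' = a ∧ y' = c) ∨ (x = a ∧ y = c ∧ x' = b ∧ y' = b))) ∨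
       (v < 0 ∧ ((x = b ∧ y = c ∧ x' = a ∧ y' = b) ∨ (x = a ∧ y = b ∧ x' = b ∧ y' = c))))) ∨
    (u * (c - b) = |v| * (b - a) ∧
      ((0 < v ∧ ((x = c ∧ y = a ∧ x' = b ∧ y' = b) ∨ (x = b ∧ y = b ∧ x' = c ∧ y' = a))) ∨
       (v < 0 ∧ ((x = c ∧ y = b ∧ x' = b ∧ y' = a) ∨ (x = b ∧ y = a ∧ x' = c ∧ y' = b))))) := by
  have hvne : v ≠ 0 := by
    intro h; rw [h] at hv; simp at hv
  have hD : x - x' = 0 ∨ x - x' = (b - a) ∨ x - x' = (c - b) ∨ x - x' = (b - a) + (c - b) ∨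
      x - x' = -(b - a) ∨ x - x' = -(c - b) ∨ x - x' = -((b - a) + (c - b)) := by
    rcases hx with rfl | rfl | rfl <;> rcases hx' with rfl | rfl | rfl <;> omega
  have hbane : b - a ≠ 0 := by omega
  have hcbne : c - b ≠ 0 := by omega
  rcases lt_trichotomy v 0 with hneg | h0 | hpos
  · -- v < 0
    have habs : |v| = -v := abs_of_neg hneg
    have hE : y - y' = 0 ∨ y - y' = (b - a) ∨ y - y' = (c - b) ∨ y - y' = (b - a) + (c - b) ∨
        y - y' = -(b - a) ∨ y - y' = -(c - b) ∨ y - y' = -((b - a) + (c - b)) := by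
      rcases hy with rfl | rfl | rfl <;> rcases hy' with rfl | rfl | rfl <;> omega
    have heq' : u * (x - x') = (-v) * (y - y') := by linear_combination heq
    have hw : 0 < -v := by linarith
    have huw : -v < u := by rw [habs] at huv; exact huv
    rcases diff_lemma u (-v) (b - a) (c - b) (x - x') (y - y') hw huw (by omega) (by omega)
        hD hE heq' with hd | ⟨ee, hr⟩ | ⟨ee, hr⟩ | ⟨ee, hr⟩ | ⟨ee, hr⟩
    · exact Or.inl ⟨by omega, by omega⟩
    · have hR : u * (b - a) = |v| * (c - a) := by rw [habs]; linear_combination hr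
      have hpq : b - a ≠ c - b := by
        intro h
        have h2 : u * (b - a) = (2 * |v|) * (b - a) := by rw [habs]; linear_combination hr - (-v) * h
        exact not_u_eq_two_abs u v hv hgcd hu3 (mul_right_cancel₀ hbane h2)
      refine Or.inr (Or.inl ⟨hR, Or.inr ⟨hneg, ?_⟩⟩)
      rcases ee with ⟨e1, e2⟩ | ⟨e1, e2⟩
      · obtain ⟨q1, q2⟩ := pinBA a b c x x' hab hbc hx hx' hpq e1
        obtain ⟨q3, q4⟩ := pinCA a b c y y' hab hbc hy hy' e2
        exact Or.inl ⟨q1, q3, q2, q4⟩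
      · obtain ⟨q1, q2⟩ := pinBA a b c x' x hab hbc hx' hx hpq (by omega)
        obtain ⟨q3, q4⟩ := pinCA a b c y' y hab hbc hy' hy (by omega)
        exact Or.inr ⟨q2, q4, q1, q3⟩
    · have hR : u * (c - b) = |v| * (c - a) := by rw [habs]; linear_combination hr
      have hpq : b - a ≠ c - b := by
        intro h
        have h2 : u * (c - b) = (2 * |v|) * (c - b) := by rw [habs]; linear_combination hr + (-v) * h
        exact not_u_eq_two_abs u v hv hgcd hu3 (mul_right_cancel₀ hcbne h2)
      refine Or.inr (Or.inr (Or.inl ⟨hR, Or.inr ⟨hneg, ?_⟩⟩))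
      rcases ee with ⟨e1, e2⟩ | ⟨e1, e2⟩
      · obtain ⟨q1, q2⟩ := pinCB a b c x x' hab hbc hx hx' hpq e1
        obtain ⟨q3, q4⟩ := pinCA a b c y y' hab hbc hy hy' e2
        exact Or.inl ⟨q1, q3, q2, q4⟩
      · obtain ⟨q1, q2⟩ := pinCB a b c x' x hab hbc hx' hx hpq (by omega)
        obtain ⟨q3, q4⟩ := pinCA a b c y' y hab hbc hy' hy (by omega)
        exact Or.inr ⟨q2, q4, q1, q3⟩
    · have hR : u * (b - a) = |v| * (c - b) := by rw [habs]; linear_combination hr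
      have hpq : b - a ≠ c - b := by
        intro h
        have h2 : u * (b - a) = |v| * (b - a) := by rw [habs]; linear_combination hr - (-v) * h
        have := mul_right_cancel₀ hbane h2
        rw [this] at huv; exact absurd huv (lt_irrefl _)
      refine Or.inr (Or.inr (Or.inr (Or.inl ⟨hR, Or.inr ⟨hneg, ?_⟩⟩)))
      rcases ee with ⟨e1, e2⟩ | ⟨e1, e2⟩
      · obtain ⟨q1, q2⟩ := pinBA a b c x x' hab hbc hx hx' hpq e1
        obtain ⟨q3, q4⟩ := pinCB a b c y y' hab hbc hy hy' hpq e2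
        exact Or.inl ⟨q1, q3, q2, q4⟩
      · obtain ⟨q1, q2⟩ := pinBA a b c x' x hab hbc hx' hx hpq (by omega)
        obtain ⟨q3, q4⟩ := pinCB a b c y' y hab hbc hy' hy hpq (by omega)
        exact Or.inr ⟨q2, q4, q1, q3⟩
    · have hR : u * (c - b) = |v| * (b - a) := by rw [habs]; linear_combination hr
      have hpq : b - a ≠ c - b := by
        intro h
        have h2 : u * (c - b) = |v| * (c - b) := by rw [habs]; linear_combination hr + (-v) * h
        have := mul_right_cancel₀ hcbne h2
        rw [this] at huv; exact absurd huv (lt_irrefl _)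
      refine Or.inr (Or.inr (Or.inr (Or.inr ⟨hR, Or.inr ⟨hneg, ?_⟩⟩)))
      rcases ee with ⟨e1, e2⟩ | ⟨e1, e2⟩
      · obtain ⟨q1, q2⟩ := pinCB a b c x x' hab hbc hx hx' hpq e1
        obtain ⟨q3, q4⟩ := pinBA a b c y y' hab hbc hy hy' hpq e2
        exact Or.inl ⟨q1, q3, q2, q4⟩
      · obtain ⟨q1, q2⟩ := pinCB a b c x' x hab hbc hx' hx hpq (by omega)
        obtain ⟨q3, q4⟩ := pinBA a b c y' y hab hbc hy' hy hpq (by omega)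
        exact Or.inr ⟨q2, q4, q1, q3⟩
  · exact absurd h0 hvne
  · -- 0 < v
    have habs : |v| = v := abs_of_pos hpos
    have hE : y' - y = 0 ∨ y' - y = (b - a) ∨ y' - y = (c - b) ∨ y' - y = (b - a) + (c - b) ∨
        y' - y = -(b - a) ∨ y' - y = -(c - b) ∨ y' - y = -((b - a) + (c - b)) := by
      rcases hy with rfl | rfl | rfl <;> rcases hy' with rfl | rfl | rfl <;> omega
    have heq' : u * (x - x') = v * (y' - y) := by linear_combination heq
    have huw : v < u := by rw [habs] at huv; exact huv
    rcases diff_lemma u v (b - a) (c - b) (x - x') (y' - y) hpos huw (by omega) (by omega)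
        hD hE heq' with hd | ⟨ee, hr⟩ | ⟨ee, hr⟩ | ⟨ee, hr⟩ | ⟨ee, hr⟩
    · exact Or.inl ⟨by omega, by omega⟩
    · have hR : u * (b - a) = |v| * (c - a) := by rw [habs]; linear_combination hr
      have hpq : b - a ≠ c - b := by
        intro h
        have h2 : u * (b - a) = (2 * |v|) * (b - a) := by rw [habs]; linear_combination hr - v * h
        exact not_u_eq_two_abs u v hv hgcd hu3 (mul_right_cancel₀ hbane h2)
      refine Or.inr (Or.inl ⟨hR, Or.inl ⟨hpos, ?_⟩⟩)
      rcases ee with ⟨e1, e2⟩ | ⟨e1, e2⟩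
      · obtain ⟨q1, q2⟩ := pinBA a b c x x' hab hbc hx hx' hpq e1
        obtain ⟨q3, q4⟩ := pinCA a b c y' y hab hbc hy' hy e2
        exact Or.inl ⟨q1, q4, q2, q3⟩
      · obtain ⟨q1, q2⟩ := pinBA a b c x' x hab hbc hx' hx hpq (by omega)
        obtain ⟨q3, q4⟩ := pinCA a b c y y' hab hbc hy hy' (by omega)
        exact Or.inr ⟨q2, q3, q1, q4⟩
    · have hR : u * (c - b) = |v| * (c - a) := by rw [habs]; linear_combination hr
      have hpq : b - a ≠ c - b := by
        intro h
        have h2 : u * (c - b) = (2 * |v|) * (c - b) := by rw [habs]; linear_combination hr + v * h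
        exact not_u_eq_two_abs u v hv hgcd hu3 (mul_right_cancel₀ hcbne h2)
      refine Or.inr (Or.inr (Or.inl ⟨hR, Or.inl ⟨hpos, ?_⟩⟩))
      rcases ee with ⟨e1, e2⟩ | ⟨e1, e2⟩
      · obtain ⟨q1, q2⟩ := pinCB a b c x x' hab hbc hx hx' hpq e1
        obtain ⟨q3, q4⟩ := pinCA a b c y' y hab hbc hy' hy e2
        exact Or.inl ⟨q1, q4, q2, q3⟩
      · obtain ⟨q1, q2⟩ := pinCB a b c x' x hab hbc hx' hx hpq (by omega)
        obtain ⟨q3, q4⟩ := pinCA a b c y y' hab hbc hy hy' (by omega)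
        exact Or.inr ⟨q2, q3, q1, q4⟩
    · have hR : u * (b - a) = |v| * (c - b) := by rw [habs]; linear_combination hr
      have hpq : b - a ≠ c - b := by
        intro h
        have h2 : u * (b - a) = |v| * (b - a) := by rw [habs]; linear_combination hr - v * h
        have := mul_right_cancel₀ hbane h2
        rw [this] at huv; exact absurd huv (lt_irrefl _)
      refine Or.inr (Or.inr (Or.inr (Or.inl ⟨hR, Or.inl ⟨hpos, ?_⟩⟩)))
      rcases ee with ⟨e1, e2⟩ | ⟨e1, e2⟩
      · obtain ⟨q1, q2⟩ := pinBA a b c x x' hab hbc hx hx' hpq e1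
        obtain ⟨q3, q4⟩ := pinCB a b c y' y hab hbc hy' hy hpq e2
        exact Or.inl ⟨q1, q4, q2, q3⟩
      · obtain ⟨q1, q2⟩ := pinBA a b c x' x hab hbc hx' hx hpq (by omega)
        obtain ⟨q3, q4⟩ := pinCB a b c y y' hab hbc hy hy' hpq (by omega)
        exact Or.inr ⟨q2, q3, q1, q4⟩
    · have hR : u * (c - b) = |v| * (b - a) := by rw [habs]; linear_combination hr
      have hpq : b - a ≠ c - b := by
        intro h
        have h2 : u * (c - b) = |v| * (c - b) := by rw [habs]; linear_combination hr + v * h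
        have := mul_right_cancel₀ hcbne h2
        rw [this] at huv; exact absurd huv (lt_irrefl _)
      refine Or.inr (Or.inr (Or.inr (Or.inr ⟨hR, Or.inl ⟨hpos, ?_⟩⟩)))
      rcases ee with ⟨e1, e2⟩ | ⟨e1, e2⟩
      · obtain ⟨q1, q2⟩ := pinCB a b c x x' hab hbc hx hx' hpq e1
        obtain ⟨q3, q4⟩ := pinBA a b c y' y hab hbc hy' hy hpq e2
        exact Or.inl ⟨q1, q4, q2, q3⟩
      · obtain ⟨q1, q2⟩ := pinCB a b c x' x hab hbc hx' hx hpq (by omega)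
        obtain ⟨q3, q4⟩ := pinBA a b c y y' hab hbc hy hy' hpq (by omega)
        exact Or.inr ⟨q2, q3, q1, q4⟩

lemma no_golden (u v : ℤ) (hv : 1 ≤ |v|) (huv : |v| < u) (hgcd : Int.gcd u v = 1)
    (hu3 : 3 ≤ u) (key : u * u = u * |v| + |v| * |v|) : False := by
  have hdvd : |v| ∣ u * u := ⟨u + |v|, by linarith [mul_comm |v| (u + |v|), mul_add |v| u |v|]⟩
  have hco : IsCoprime u |v| := by
    rw [Int.isCoprime_iff_gcd_eq_one]
    simpa [Int.gcd, Int.natAbs_abs] using hgcd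
  have hdvu : |v| ∣ u := IsCoprime.dvd_of_dvd_mul_left hco.symm hdvd
  have hd1 : |v| ∣ (1 : ℤ) := by
    have hg := Int.dvd_coe_gcd hdvu ((abs_dvd v v).mpr dvd_rfl)
    rw [hgcd] at hg; exact_mod_cast hg
  have hle := Int.le_of_dvd one_pos hd1
  have habs1 : |v| = 1 := le_antisymm hle hv
  rw [habs1] at key
  nlinarith

lemma ex12 (u v a b c : ℤ) (hv : 1 ≤ |v|) (huv : |v| < u) (hgcd : Int.gcd u v = 1)
    (hu3 : 3 ≤ u) (hab : a < b) (hbc : b < c)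
    (hR1 : u * (b - a) = |v| * (c - a)) (hR2 : u * (c - b) = |v| * (c - a)) : False := by
  have h : u * (b - a) = u * (c - b) := by linarith
  have h2 : b - a = c - b := mul_left_cancel₀ (show u ≠ 0 by omega) h
  have h3 : u * (b - a) = (2 * |v|) * (b - a) := by linear_combination hR1 - |v| * h2
  exact not_u_eq_two_abs u v hv hgcd hu3 (mul_right_cancel₀ (show b - a ≠ 0 by omega) h3)

lemma ex13 (u v a b c : ℤ) (hv : 1 ≤ |v|) (huv : |v| < u) (hgcd : Int.gcd u v = 1)
    (hu3 : 3 ≤ u) (hab : a < b) (hbc : b < c)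
    (hR1 : u * (b - a) = |v| * (c - a)) (hR3 : u * (b - a) = |v| * (c - b)) : False := by
  have h : |v| * (c - a) = |v| * (c - b) := by linarith
  have h2 : c - a = c - b := mul_left_cancel₀ (show |v| ≠ 0 by intro hh; rw [hh] at hv; omega) h
  omega

lemma ex14 (u v a b c : ℤ) (hv : 1 ≤ |v|) (huv : |v| < u) (hgcd : Int.gcd u v = 1)
    (hu3 : 3 ≤ u) (hab : a < b) (hbc : b < c)
    (hR1 : u * (b - a) = |v| * (c - a)) (hR4 : u * (c - b) = |v| * (b - a)) : False := by
  have k : u * u * (b - a) = (u * |v| + |v| * |v|) * (b - a) := by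
    linear_combination u * hR1 + |v| * hR4
  exact no_golden u v hv huv hgcd hu3 (mul_right_cancel₀ (show b - a ≠ 0 by omega) k)

lemma ex23 (u v a b c : ℤ) (hv : 1 ≤ |v|) (huv : |v| < u) (hgcd : Int.gcd u v = 1)
    (hu3 : 3 ≤ u) (hab : a < b) (hbc : b < c)
    (hR2 : u * (c - b) = |v| * (c - a)) (hR3 : u * (b - a) = |v| * (c - b)) : False := by
  have k : u * u * (c - b) = (u * |v| + |v| * |v|) * (c - b) := by
    linear_combination u * hR2 + |v| * hR3
  exact no_golden u v hv huv hgcd hu3 (mul_right_cancel₀ (show c - b ≠ 0 by omega) k)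

lemma ex24 (u v a b c : ℤ) (hv : 1 ≤ |v|) (huv : |v| < u) (hgcd : Int.gcd u v = 1)
    (hu3 : 3 ≤ u) (hab : a < b) (hbc : b < c)
    (hR2 : u * (c - b) = |v| * (c - a)) (hR4 : u * (c - b) = |v| * (b - a)) : False := by
  have h : |v| * (c - a) = |v| * (b - a) := by linarith
  have h2 : c - a = b - a := mul_left_cancel₀ (show |v| ≠ 0 by intro hh; rw [hh] at hv; omega) h
  omega

lemma ex34 (u v a b c : ℤ) (hv : 1 ≤ |v|) (huv : |v| < u) (hgcd : Int.gcd u v = 1)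
    (hu3 : 3 ≤ u) (hab : a < b) (hbc : b < c)
    (hR3 : u * (b - a) = |v| * (c - b)) (hR4 : u * (c - b) = |v| * (b - a)) : False := by
  have k : u * u * (b - a) = (|v| * |v|) * (b - a) := by
    linear_combination u * hR3 + |v| * hR4
  have key : u * u = |v| * |v| := mul_right_cancel₀ (show b - a ≠ 0 by omega) k
  nlinarith [mul_lt_mul_of_pos_left huv (show (0:ℤ) < u by omega),
    mul_lt_mul_of_pos_right huv (show (0:ℤ) < |v| by linarith)]

lemma aff_iff (a b c m n : ℤ) (hab : a < b) (hbc : b < c) (hm : 0 < m) (hmn : m < n) :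
    (AffinelyEquivalent {a, b, c} ({0, m, n} : Finset ℤ) ↔
      ((n - m) * (b - a) = m * (c - b) ∨ (n - m) * (c - b) = m * (b - a))) := by
  have hbaQ : ((b : ℚ) - (a : ℚ)) ≠ 0 := by
    have : (a : ℚ) < (b : ℚ) := by exact_mod_cast hab
    linarith
  have hcbQ : ((c : ℚ) - (b : ℚ)) ≠ 0 := by
    have : (b : ℚ) < (c : ℚ) := by exact_mod_cast hbc
    linarith
  constructor
  · rintro ⟨r, s, hr, himg⟩
    have hL : (({0, m, n} : Finset ℤ).image (fun t : ℤ => (t : ℚ))) =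
        {(0 : ℚ), (m : ℚ), (n : ℚ)} := by
      simp
    have hR : (({a, b, c} : Finset ℤ).image (fun t : ℤ => r * (t : ℚ) + s)) =
        {r * (a : ℚ) + s, r * (b : ℚ) + s, r * (c : ℚ) + s} := by
      simp
    rw [hL, hR] at himg
    have h0m : (0 : ℚ) < (m : ℚ) := by exact_mod_cast hm
    have hmnQ : ((m : ℚ)) < (n : ℚ) := by exact_mod_cast hmn
    have haQ : (a : ℚ) < (b : ℚ) := by exact_mod_cast hab
    have hbQ : (b : ℚ) < (c : ℚ) := by exact_mod_cast hbc
    rcases lt_or_gt_of_ne hr with hneg | hpos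
    · have himg' : ({(0 : ℚ), (m : ℚ), (n : ℚ)} : Finset ℚ) =
          {r * (c : ℚ) + s, r * (b : ℚ) + s, r * (a : ℚ) + s} := by
        rw [himg]; ext t
        simp only [Finset.mem_insert, Finset.mem_singleton]
        tauto
      obtain ⟨e1, e2, e3⟩ := sorted3 0 (m : ℚ) (n : ℚ) _ _ _ h0m hmnQ
        (by nlinarith) (by nlinarith) himg'
      right
      have key : ((n : ℚ) - (m : ℚ)) * ((c : ℚ) - (b : ℚ)) = (m : ℚ) * ((b : ℚ) - (a : ℚ)) := by
        linear_combination ((c : ℚ) - (b : ℚ)) * e3 - ((c : ℚ) - (b : ℚ)) * e2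
          - ((b : ℚ) - (a : ℚ)) * e2 + ((b : ℚ) - (a : ℚ)) * e1
      exact_mod_cast key
    · obtain ⟨e1, e2, e3⟩ := sorted3 0 (m : ℚ) (n : ℚ) _ _ _ h0m hmnQ
        (by nlinarith) (by nlinarith) himg
      left
      have key : ((n : ℚ) - (m : ℚ)) * ((b : ℚ) - (a : ℚ)) = (m : ℚ) * ((c : ℚ) - (b : ℚ)) := by
        linear_combination ((b : ℚ) - (a : ℚ)) * e3 - ((b : ℚ) - (a : ℚ)) * e2
          - ((c : ℚ) - (b : ℚ)) * e2 + ((c : ℚ) - (b : ℚ)) * e1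
      exact_mod_cast key
  · rintro (h | h)
    · refine ⟨(m : ℚ) / ((b : ℚ) - (a : ℚ)), -((m : ℚ) / ((b : ℚ) - (a : ℚ))) * (a : ℚ), ?_, ?_⟩
      · exact div_ne_zero (by exact_mod_cast hm.ne') hbaQ
      · have hQ : ((n : ℚ) - (m : ℚ)) * ((b : ℚ) - (a : ℚ)) = (m : ℚ) * ((c : ℚ) - (b : ℚ)) := by
          exact_mod_cast h
        have e1 : (m : ℚ) / ((b : ℚ) - (a : ℚ)) * (a : ℚ) +
            -((m : ℚ) / ((b : ℚ) - (a : ℚ))) * (a : ℚ) = 0 := by ring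
        have e2 : (m : ℚ) / ((b : ℚ) - (a : ℚ)) * (b : ℚ) +
            -((m : ℚ) / ((b : ℚ) - (a : ℚ))) * (a : ℚ) = (m : ℚ) := by
          field_simp
          ring
        have e3 : (m : ℚ) / ((b : ℚ) - (a : ℚ)) * (c : ℚ) +
            -((m : ℚ) / ((b : ℚ) - (a : ℚ))) * (a : ℚ) = (n : ℚ) := by
          field_simp
          linear_combination -hQ
        simp only [Finset.image_insert, Finset.image_singleton, Int.cast_zero]
        rw [e1, e2, e3]
    · refine ⟨-((m : ℚ) / ((c : ℚ) - (b : ℚ))), ((m : ℚ) / ((c : ℚ) - (b : ℚ))) * (c : ℚ), ?_, ?_⟩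
      · exact neg_ne_zero.mpr (div_ne_zero (by exact_mod_cast hm.ne') hcbQ)
      · have hQ : ((n : ℚ) - (m : ℚ)) * ((c : ℚ) - (b : ℚ)) = (m : ℚ) * ((b : ℚ) - (a : ℚ)) := by
          exact_mod_cast h
        have e1 : -((m : ℚ) / ((c : ℚ) - (b : ℚ))) * (a : ℚ) +
            ((m : ℚ) / ((c : ℚ) - (b : ℚ))) * (c : ℚ) = (n : ℚ) := by
          field_simp
          linear_combination -hQ
        have e2 : -((m : ℚ) / ((c : ℚ) - (b : ℚ))) * (b : ℚ) +
            ((m : ℚ) / ((c : ℚ) - (b : ℚ))) * (c : ℚ) = (m : ℚ) := by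
          field_simp
          ring
        have e3 : -((m : ℚ) / ((c : ℚ) - (b : ℚ))) * (c : ℚ) +
            ((m : ℚ) / ((c : ℚ) - (b : ℚ))) * (c : ℚ) = 0 := by ring
        simp only [Finset.image_insert, Finset.image_singleton, Int.cast_zero]
        rw [e1, e2, e3]
        ext t
        simp only [Finset.mem_insert, Finset.mem_singleton]
        tauto


theorem stmt_3 (u v : ℤ) (h1 : 1 ≤ |v|) (h2 : |v| < u) (h3 : Int.gcd u v = 1)
    (h4 : 3 ≤ u) (A : Finset ℤ) (hA : A.card = 3) :
    ((binFormImage u v A).card = 8 ∨ (binFormImage u v A).card = 9) ∧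
    ((binFormImage u v A).card = 8 ↔
      AffinelyEquivalent A ({0, |v|, u} : Finset ℤ) ∨
      AffinelyEquivalent A ({0, |v|, u + |v|} : Finset ℤ)) := by
  obtain ⟨a, b, c, hab, hbc, rfl⟩ := exists_sorted A hA
  have habs0 : 0 < |v| := by linarith
  have haff1 : AffinelyEquivalent {a, b, c} ({0, |v|, u} : Finset ℤ) ↔
      (u * (b - a) = |v| * (c - a) ∨ u * (c - b) = |v| * (c - a)) := by
    rw [aff_iff a b c |v| u hab hbc habs0 h2]
    constructor
    · rintro (h | h)
      · left; linear_combination h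
      · right; linear_combination h
    · rintro (h | h)
      · left; linear_combination h
      · right; linear_combination h
  have haff2 : AffinelyEquivalent {a, b, c} ({0, |v|, u + |v|} : Finset ℤ) ↔
      (u * (b - a) = |v| * (c - b) ∨ u * (c - b) = |v| * (b - a)) := by
    rw [aff_iff a b c |v| (u + |v|) hab hbc habs0 (by linarith)]
    constructor
    · rintro (h | h)
      · left; linear_combination h
      · right; linear_combination h
    · rintro (h | h)
      · left; linear_combination h
      · right; linear_combination h
  have hBdef : binFormImage u v {a, b, c} =
      ((({a, b, c} : Finset ℤ) ×ˢ ({a, b, c} : Finset ℤ)).image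
        (fun p : ℤ × ℤ => u * p.1 + v * p.2)) := rfl
  have hmem : ∀ t : ℤ, t ∈ ({a, b, c} : Finset ℤ) ↔ (t = a ∨ t = b ∨ t = c) := by
    intro t; simp
  have hScard : ((({a, b, c} : Finset ℤ) ×ˢ ({a, b, c} : Finset ℤ))).card = 9 := by
    rw [Finset.card_product, hA]
  by_cases hE8 : (u * (b - a) = |v| * (c - a) ∨ u * (c - b) = |v| * (c - a) ∨
      u * (b - a) = |v| * (c - b) ∨ u * (c - b) = |v| * (b - a))
  · -- some relation holds : card = 8
    have hc8 : (binFormImage u v {a, b, c}).card = 8 := by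
      rcases hE8 with hrel | hrel | hrel | hrel <;>
        rcases lt_trichotomy v 0 with hsgn | hsgn | hsgn
      all_goals (try (exact absurd hsgn (by intro hh; rw [hh] at h1; simp at h1)))
      · have hre := hrel
        rw [abs_of_neg hsgn] at hre
        have hkey := card_image_pred (({a,b,c} : Finset ℤ) ×ˢ ({a,b,c} : Finset ℤ))
          (fun p : ℤ × ℤ => u * p.1 + v * p.2) (b, c) (a, a)
          (by simp [Finset.mem_product]) (by simp [Finset.mem_product])
          (by intro hh; rw [Prod.mk.injEq] at hh; omega)
          (by show u * b + v * c = u * a + v * a; linear_combination hre)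
          ?_
        · rw [hBdef, hkey, hScard]
        · rintro ⟨x, y⟩ hxy ⟨x', y'⟩ hxy' hfe
          rw [Finset.mem_product] at hxy hxy'
          rcases sorted_master u v a b c x y x' y' h1 h2 h3 h4 hab hbc
              ((hmem x).mp hxy.1) ((hmem y).mp hxy.2) ((hmem x').mp hxy'.1) ((hmem y').mp hxy'.2)
              (by simpa using hfe) with ⟨e1, e2⟩ | ⟨hr, hs⟩ | ⟨hr, hs⟩ | ⟨hr, hs⟩ | ⟨hr, hs⟩
          · left; rw [Prod.mk.injEq]; exact ⟨e1, e2⟩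
          · obtain ⟨hsg, hcells⟩ | ⟨hsg, hcells⟩ := hs
            · exact absurd hsg (by linarith)
            · rcases hcells with ⟨c1, c2, c3, c4⟩ | ⟨c1, c2, c3, c4⟩
              · right; left; exact ⟨by rw [c1, c2], by rw [c3, c4]⟩
              · right; right; exact ⟨by rw [c1, c2], by rw [c3, c4]⟩
          · exact (ex12 u v a b c h1 h2 h3 h4 hab hbc hrel hr).elim
          · exact (ex13 u v a b c h1 h2 h3 h4 hab hbc hrel hr).elim
          · exact (ex14 u v a b c h1 h2 h3 h4 hab hbc hrel hr).elim
      · have hre := hrel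
        rw [abs_of_pos hsgn] at hre
        have hkey := card_image_pred (({a,b,c} : Finset ℤ) ×ˢ ({a,b,c} : Finset ℤ))
          (fun p : ℤ × ℤ => u * p.1 + v * p.2) (b, a) (a, c)
          (by simp [Finset.mem_product]) (by simp [Finset.mem_product])
          (by intro hh; rw [Prod.mk.injEq] at hh; omega)
          (by show u * b + v * a = u * a + v * c; linear_combination hre)
          ?_
        · rw [hBdef, hkey, hScard]
        · rintro ⟨x, y⟩ hxy ⟨x', y'⟩ hxy' hfe
          rw [Finset.mem_product] at hxy hxy'
          rcases sorted_master u v a b c x y x' y' h1 h2 h3 h4 hab hbc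
              ((hmem x).mp hxy.1) ((hmem y).mp hxy.2) ((hmem x').mp hxy'.1) ((hmem y').mp hxy'.2)
              (by simpa using hfe) with ⟨e1, e2⟩ | ⟨hr, hs⟩ | ⟨hr, hs⟩ | ⟨hr, hs⟩ | ⟨hr, hs⟩
          · left; rw [Prod.mk.injEq]; exact ⟨e1, e2⟩
          · obtain ⟨hsg, hcells⟩ | ⟨hsg, hcells⟩ := hs
            · rcases hcells with ⟨c1, c2, c3, c4⟩ | ⟨c1, c2, c3, c4⟩
              · right; left; exact ⟨by rw [c1, c2], by rw [c3, c4]⟩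
              · right; right; exact ⟨by rw [c1, c2], by rw [c3, c4]⟩
            · exact absurd hsg (by linarith)
          · exact (ex12 u v a b c h1 h2 h3 h4 hab hbc hrel hr).elim
          · exact (ex13 u v a b c h1 h2 h3 h4 hab hbc hrel hr).elim
          · exact (ex14 u v a b c h1 h2 h3 h4 hab hbc hrel hr).elim
      · have hre := hrel
        rw [abs_of_neg hsgn] at hre
        have hkey := card_image_pred (({a,b,c} : Finset ℤ) ×ˢ ({a,b,c} : Finset ℤ))
          (fun p : ℤ × ℤ => u * p.1 + v * p.2) (c, c) (b, a)
          (by simp [Finset.mem_product]) (by simp [Finset.mem_product])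
          (by intro hh; rw [Prod.mk.injEq] at hh; omega)
          (by show u * c + v * c = u * b + v * a; linear_combination hre)
          ?_
        · rw [hBdef, hkey, hScard]
        · rintro ⟨x, y⟩ hxy ⟨x', y'⟩ hxy' hfe
          rw [Finset.mem_product] at hxy hxy'
          rcases sorted_master u v a b c x y x' y' h1 h2 h3 h4 hab hbc
              ((hmem x).mp hxy.1) ((hmem y).mp hxy.2) ((hmem x').mp hxy'.1) ((hmem y').mp hxy'.2)
              (by simpa using hfe) with ⟨e1, e2⟩ | ⟨hr, hs⟩ | ⟨hr, hs⟩ | ⟨hr, hs⟩ | ⟨hr, hs⟩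
          · left; rw [Prod.mk.injEq]; exact ⟨e1, e2⟩
          · exact (ex12 u v a b c h1 h2 h3 h4 hab hbc hr hrel).elim
          · obtain ⟨hsg, hcells⟩ | ⟨hsg, hcells⟩ := hs
            · exact absurd hsg (by linarith)
            · rcases hcells with ⟨c1, c2, c3, c4⟩ | ⟨c1, c2, c3, c4⟩
              · right; left; exact ⟨by rw [c1, c2], by rw [c3, c4]⟩
              · right; right; exact ⟨by rw [c1, c2], by rw [c3, c4]⟩
          · exact (ex23 u v a b c h1 h2 h3 h4 hab hbc hrel hr).elim
          · exact (ex24 u v a b c h1 h2 h3 h4 hab hbc hrel hr).elim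
      · have hre := hrel
        rw [abs_of_pos hsgn] at hre
        have hkey := card_image_pred (({a,b,c} : Finset ℤ) ×ˢ ({a,b,c} : Finset ℤ))
          (fun p : ℤ × ℤ => u * p.1 + v * p.2) (c, a) (b, c)
          (by simp [Finset.mem_product]) (by simp [Finset.mem_product])
          (by intro hh; rw [Prod.mk.injEq] at hh; omega)
          (by show u * c + v * a = u * b + v * c; linear_combination hre)
          ?_
        · rw [hBdef, hkey, hScard]
        · rintro ⟨x, y⟩ hxy ⟨x', y'⟩ hxy' hfe
          rw [Finset.mem_product] at hxy hxy'
          rcases sorted_master u v a b c x y x' y' h1 h2 h3 h4 hab hbc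
              ((hmem x).mp hxy.1) ((hmem y).mp hxy.2) ((hmem x').mp hxy'.1) ((hmem y').mp hxy'.2)
              (by simpa using hfe) with ⟨e1, e2⟩ | ⟨hr, hs⟩ | ⟨hr, hs⟩ | ⟨hr, hs⟩ | ⟨hr, hs⟩
          · left; rw [Prod.mk.injEq]; exact ⟨e1, e2⟩
          · exact (ex12 u v a b c h1 h2 h3 h4 hab hbc hr hrel).elim
          · obtain ⟨hsg, hcells⟩ | ⟨hsg, hcells⟩ := hs
            · rcases hcells with ⟨c1, c2, c3, c4⟩ | ⟨c1, c2, c3, c4⟩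
              · right; left; exact ⟨by rw [c1, c2], by rw [c3, c4]⟩
              · right; right; exact ⟨by rw [c1, c2], by rw [c3, c4]⟩
            · exact absurd hsg (by linarith)
          · exact (ex23 u v a b c h1 h2 h3 h4 hab hbc hrel hr).elim
          · exact (ex24 u v a b c h1 h2 h3 h4 hab hbc hrel hr).elim
      · have hre := hrel
        rw [abs_of_neg hsgn] at hre
        have hkey := card_image_pred (({a,b,c} : Finset ℤ) ×ˢ ({a,b,c} : Finset ℤ))
          (fun p : ℤ × ℤ => u * p.1 + v * p.2) (b, c) (a, b)
          (by simp [Finset.mem_product]) (by simp [Finset.mem_product])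
          (by intro hh; rw [Prod.mk.injEq] at hh; omega)
          (by show u * b + v * c = u * a + v * b; linear_combination hre)
          ?_
        · rw [hBdef, hkey, hScard]
        · rintro ⟨x, y⟩ hxy ⟨x', y'⟩ hxy' hfe
          rw [Finset.mem_product] at hxy hxy'
          rcases sorted_master u v a b c x y x' y' h1 h2 h3 h4 hab hbc
              ((hmem x).mp hxy.1) ((hmem y).mp hxy.2) ((hmem x').mp hxy'.1) ((hmem y').mp hxy'.2)
              (by simpa using hfe) with ⟨e1, e2⟩ | ⟨hr, hs⟩ | ⟨hr, hs⟩ | ⟨hr, hs⟩ | ⟨hr, hs⟩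
          · left; rw [Prod.mk.injEq]; exact ⟨e1, e2⟩
          · exact (ex13 u v a b c h1 h2 h3 h4 hab hbc hr hrel).elim
          · exact (ex23 u v a b c h1 h2 h3 h4 hab hbc hr hrel).elim
          · obtain ⟨hsg, hcells⟩ | ⟨hsg, hcells⟩ := hs
            · exact absurd hsg (by linarith)
            · rcases hcells with ⟨c1, c2, c3, c4⟩ | ⟨c1, c2, c3, c4⟩
              · right; left; exact ⟨by rw [c1, c2], by rw [c3, c4]⟩
              · right; right; exact ⟨by rw [c1, c2], by rw [c3, c4]⟩
          · exact (ex34 u v a b c h1 h2 h3 h4 hab hbc hrel hr).elim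
      · have hre := hrel
        rw [abs_of_pos hsgn] at hre
        have hkey := card_image_pred (({a,b,c} : Finset ℤ) ×ˢ ({a,b,c} : Finset ℤ))
          (fun p : ℤ × ℤ => u * p.1 + v * p.2) (b, b) (a, c)
          (by simp [Finset.mem_product]) (by simp [Finset.mem_product])
          (by intro hh; rw [Prod.mk.injEq] at hh; omega)
          (by show u * b + v * b = u * a + v * c; linear_combination hre)
          ?_
        · rw [hBdef, hkey, hScard]
        · rintro ⟨x, y⟩ hxy ⟨x', y'⟩ hxy' hfe
          rw [Finset.mem_product] at hxy hxy'
          rcases sorted_master u v a b c x y x' y' h1 h2 h3 h4 hab hbc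
              ((hmem x).mp hxy.1) ((hmem y).mp hxy.2) ((hmem x').mp hxy'.1) ((hmem y').mp hxy'.2)
              (by simpa using hfe) with ⟨e1, e2⟩ | ⟨hr, hs⟩ | ⟨hr, hs⟩ | ⟨hr, hs⟩ | ⟨hr, hs⟩
          · left; rw [Prod.mk.injEq]; exact ⟨e1, e2⟩
          · exact (ex13 u v a b c h1 h2 h3 h4 hab hbc hr hrel).elim
          · exact (ex23 u v a b c h1 h2 h3 h4 hab hbc hr hrel).elim
          · obtain ⟨hsg, hcells⟩ | ⟨hsg, hcells⟩ := hs
            · rcases hcells with ⟨c1, c2, c3, c4⟩ | ⟨c1, c2, c3, c4⟩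
              · right; left; exact ⟨by rw [c1, c2], by rw [c3, c4]⟩
              · right; right; exact ⟨by rw [c1, c2], by rw [c3, c4]⟩
            · exact absurd hsg (by linarith)
          · exact (ex34 u v a b c h1 h2 h3 h4 hab hbc hrel hr).elim
      · have hre := hrel
        rw [abs_of_neg hsgn] at hre
        have hkey := card_image_pred (({a,b,c} : Finset ℤ) ×ˢ ({a,b,c} : Finset ℤ))
          (fun p : ℤ × ℤ => u * p.1 + v * p.2) (c, b) (b, a)
          (by simp [Finset.mem_product]) (by simp [Finset.mem_product])
          (by intro hh; rw [Prod.mk.injEq] at hh; omega)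
          (by show u * c + v * b = u * b + v * a; linear_combination hre)
          ?_
        · rw [hBdef, hkey, hScard]
        · rintro ⟨x, y⟩ hxy ⟨x', y'⟩ hxy' hfe
          rw [Finset.mem_product] at hxy hxy'
          rcases sorted_master u v a b c x y x' y' h1 h2 h3 h4 hab hbc
              ((hmem x).mp hxy.1) ((hmem y).mp hxy.2) ((hmem x').mp hxy'.1) ((hmem y').mp hxy'.2)
              (by simpa using hfe) with ⟨e1, e2⟩ | ⟨hr, hs⟩ | ⟨hr, hs⟩ | ⟨hr, hs⟩ | ⟨hr, hs⟩
          · left; rw [Prod.mk.injEq]; exact ⟨e1, e2⟩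
          · exact (ex14 u v a b c h1 h2 h3 h4 hab hbc hr hrel).elim
          · exact (ex24 u v a b c h1 h2 h3 h4 hab hbc hr hrel).elim
          · exact (ex34 u v a b c h1 h2 h3 h4 hab hbc hr hrel).elim
          · obtain ⟨hsg, hcells⟩ | ⟨hsg, hcells⟩ := hs
            · exact absurd hsg (by linarith)
            · rcases hcells with ⟨c1, c2, c3, c4⟩ | ⟨c1, c2, c3, c4⟩
              · right; left; exact ⟨by rw [c1, c2], by rw [c3, c4]⟩
              · right; right; exact ⟨by rw [c1, c2], by rw [c3, c4]⟩
      · have hre := hrel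
        rw [abs_of_pos hsgn] at hre
        have hkey := card_image_pred (({a,b,c} : Finset ℤ) ×ˢ ({a,b,c} : Finset ℤ))
          (fun p : ℤ × ℤ => u * p.1 + v * p.2) (c, a) (b, b)
          (by simp [Finset.mem_product]) (by simp [Finset.mem_product])
          (by intro hh; rw [Prod.mk.injEq] at hh; omega)
          (by show u * c + v * a = u * b + v * b; linear_combination hre)
          ?_
        · rw [hBdef, hkey, hScard]
        · rintro ⟨x, y⟩ hxy ⟨x', y'⟩ hxy' hfe
          rw [Finset.mem_product] at hxy hxy'
          rcases sorted_master u v a b c x y x' y' h1 h2 h3 h4 hab hbc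
              ((hmem x).mp hxy.1) ((hmem y).mp hxy.2) ((hmem x').mp hxy'.1) ((hmem y').mp hxy'.2)
              (by simpa using hfe) with ⟨e1, e2⟩ | ⟨hr, hs⟩ | ⟨hr, hs⟩ | ⟨hr, hs⟩ | ⟨hr, hs⟩
          · left; rw [Prod.mk.injEq]; exact ⟨e1, e2⟩
          · exact (ex14 u v a b c h1 h2 h3 h4 hab hbc hr hrel).elim
          · exact (ex24 u v a b c h1 h2 h3 h4 hab hbc hr hrel).elim
          · exact (ex34 u v a b c h1 h2 h3 h4 hab hbc hr hrel).elim
          · obtain ⟨hsg, hcells⟩ | ⟨hsg, hcells⟩ := hs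
            · rcases hcells with ⟨c1, c2, c3, c4⟩ | ⟨c1, c2, c3, c4⟩
              · right; left; exact ⟨by rw [c1, c2], by rw [c3, c4]⟩
              · right; right; exact ⟨by rw [c1, c2], by rw [c3, c4]⟩
            · exact absurd hsg (by linarith)
    refine ⟨Or.inl hc8, ?_⟩
    rw [hc8]
    refine ⟨fun _ => ?_, fun _ => rfl⟩
    rcases hE8 with hr | hr | hr | hr
    · exact Or.inl (haff1.mpr (Or.inl hr))
    · exact Or.inl (haff1.mpr (Or.inr hr))
    · exact Or.inr (haff2.mpr (Or.inl hr))
    · exact Or.inr (haff2.mpr (Or.inr hr))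
  · -- no relation : card = 9
    push_neg at hE8
    obtain ⟨n1, n2, n3, n4⟩ := hE8
    have hinj : Set.InjOn (fun p : ℤ × ℤ => u * p.1 + v * p.2)
        ↑(({a, b, c} : Finset ℤ) ×ˢ ({a, b, c} : Finset ℤ)) := by
      rintro ⟨x, y⟩ hxy ⟨x', y'⟩ hxy' hfe
      have hxy2 := Finset.mem_coe.mp hxy
      have hxy2' := Finset.mem_coe.mp hxy'
      rw [Finset.mem_product] at hxy2 hxy2'
      rcases sorted_master u v a b c x y x' y' h1 h2 h3 h4 hab hbc
          ((hmem x).mp hxy2.1) ((hmem y).mp hxy2.2) ((hmem x').mp hxy2'.1) ((hmem y').mp hxy2'.2)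
          (by simpa using hfe) with ⟨e1, e2⟩ | ⟨hr, _⟩ | ⟨hr, _⟩ | ⟨hr, _⟩ | ⟨hr, _⟩
      · rw [Prod.mk.injEq]; exact ⟨e1, e2⟩
      · exact absurd hr n1
      · exact absurd hr n2
      · exact absurd hr n3
      · exact absurd hr n4
    have hc9 : (binFormImage u v {a, b, c}).card = 9 := by
      rw [hBdef, Finset.card_image_of_injOn hinj, hScard]
    refine ⟨Or.inr hc9, ?_⟩
    rw [hc9]
    constructor
    · intro h; exact absurd h (by omega)
    · rintro (h | h)
      · rcases haff1.mp h with hr | hr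
        · exact absurd hr n1
        · exact absurd hr n2
      · rcases haff2.mp h with hr | hr
        · exact absurd hr n3
        · exact absurd hr n4
end

section
/- Let f(x,y) = 2x + vy be a binary linear form with v = 1 or v = −1. If A is a set of integers with |A| = 3, then |f(A)| < 9 if and only if A is affinely equivalent to one of the two sets {0,1,2} and {0,1,3}. Moreover, |f({0,1,2})| = 7 and |f({0,1,3})| = 8. -/
lemma card_image_lt' {α β : Type*} [DecidableEq β] (s : Finset α) (f : α → β) {p1 p2 : α}
    (h1 : p1 ∈ s) (h2 : p2 ∈ s) (hne : p1 ≠ p2) (hf : f p1 = f p2) :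
    (s.image f).card < s.card := by
  rcases lt_or_eq_of_le (Finset.card_image_le (s := s) (f := f)) with h | h
  · exact h
  · exact absurd (Finset.injOn_of_card_image_eq h h1 h2 hf) hne

lemma three_sorted {A : Finset ℤ} (hA : A.card = 3) :
    ∃ x y z : ℤ, x < y ∧ y < z ∧ A = {x, y, z} := by
  obtain ⟨a, b, c, hab, hac, hbc, rfl⟩ := Finset.card_eq_three.mp hA
  have key : ∀ x y z : ℤ, x ≠ y → x ≠ z → y ≠ z →
      ({x, y, z} : Finset ℤ) = {a, b, c} →
      ∃ p q r : ℤ, p < q ∧ q < r ∧ ({a,b,c} : Finset ℤ) = {p, q, r} := by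
    intro x y z h1 h2 h3 he
    rcases lt_trichotomy x y with hxy | hxy | hxy
    · rcases lt_trichotomy y z with hyz | hyz | hyz
      · exact ⟨x, y, z, hxy, hyz, he.symm⟩
      · exact absurd hyz h3
      · rcases lt_trichotomy x z with hxz | hxz | hxz
        · exact ⟨x, z, y, hxz, hyz, by rw [← he]; ext t; simp; tauto⟩
        · exact absurd hxz h2
        · exact ⟨z, x, y, hxz, hxy, by rw [← he]; ext t; simp; tauto⟩
    · exact absurd hxy h1
    · rcases lt_trichotomy x z with hxz | hxz | hxz
      · exact ⟨y, x, z, hxy, hxz, by rw [← he]; ext t; simp; tauto⟩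
      · exact absurd hxz h2
      · rcases lt_trichotomy y z with hyz | hyz | hyz
        · exact ⟨y, z, x, hyz, hxz, by rw [← he]; ext t; simp; tauto⟩
        · exact absurd hyz h3
        · exact ⟨z, y, x, hyz, hxy, by rw [← he]; ext t; simp; tauto⟩
  exact key a b c hab hac hbc rfl

lemma affEquiv_char (A : Finset ℤ) (k : ℤ) :
    AffinelyEquivalent A {0, 1, k} ↔ ∃ a d : ℤ, d ≠ 0 ∧ A = {a, a + d, a + k * d} := by
  constructor
  · rintro ⟨r, s, hr, himg⟩
    have h0 : (0 : ℚ) ∈ ({0, 1, k} : Finset ℤ).image (fun b : ℤ => (b : ℚ)) := by simp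
    have h1 : (1 : ℚ) ∈ ({0, 1, k} : Finset ℤ).image (fun b : ℤ => (b : ℚ)) := by simp
    have hkm : ((k : ℚ)) ∈ ({0, 1, k} : Finset ℤ).image (fun b : ℤ => (b : ℚ)) := by simp
    rw [himg] at h0 h1 hkm
    simp only [Finset.mem_image] at h0 h1 hkm
    obtain ⟨a0, ha0, he0⟩ := h0
    obtain ⟨a1, ha1, he1⟩ := h1
    obtain ⟨a2, ha2, he2⟩ := hkm
    have hd1 : r * ((a1 : ℚ) - a0) = 1 := by linarith
    have hdk : r * ((a2 : ℚ) - a0) = k := by linarith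
    set d : ℤ := a1 - a0 with hd
    have hdQ : ((d : ℚ)) = (a1 : ℚ) - a0 := by push_cast [hd]; ring
    have hdne : d ≠ 0 := by
      intro h
      rw [h] at hdQ
      simp at hdQ
      rw [← hdQ] at hd1
      simp at hd1
    have ha2' : (a2 : ℚ) = a0 + k * d := by
      have : r * ((a2 : ℚ) - a0 - k * d) = 0 := by
        rw [hdQ]; linear_combination hdk - (k : ℚ) * hd1
      rcases mul_eq_zero.mp this with h | h
      · exact absurd h hr
      · linarith
    have ha2Z : a2 = a0 + k * d := by
      exact_mod_cast (by push_cast; linarith [ha2'] : ((a2 : ℚ)) = ((a0 + k * d : ℤ) : ℚ))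
    refine ⟨a0, d, hdne, ?_⟩
    ext t
    simp only [Finset.mem_insert, Finset.mem_singleton]
    constructor
    · intro ht
      have : r * (t : ℚ) + s ∈ A.image (fun a : ℤ => r * (a : ℚ) + s) :=
        Finset.mem_image_of_mem _ ht
      rw [← himg] at this
      simp only [Finset.mem_image, Finset.mem_insert, Finset.mem_singleton] at this
      obtain ⟨b, hb, he⟩ := this
      have hval : r * (t : ℚ) + s = 0 ∨ r * (t : ℚ) + s = 1 ∨ r * (t : ℚ) + s = (k : ℚ) := by
        rcases hb with rfl | rfl | rfl <;> simp_all
      have inj : ∀ u w : ℤ, r * (u : ℚ) + s = r * (w : ℚ) + s → u = w := by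
        intro u w h
        have : r * ((u : ℚ) - w) = 0 := by linarith
        rcases mul_eq_zero.mp this with h' | h'
        · exact absurd h' hr
        · exact_mod_cast (by linarith : (u : ℚ) = w)
      rcases hval with h | h | h
      · left; exact inj t a0 (by rw [h, he0])
      · right; left
        have : t = a1 := inj t a1 (by rw [h, he1])
        omega
      · right; right
        have : t = a2 := inj t a2 (by rw [h, he2])
        omega
    · rintro (rfl | rfl | rfl)
      · exact ha0
      · have : a0 + d = a1 := by omega
        rw [this]; exact ha1
      · rw [← ha2Z]; exact ha2
  · rintro ⟨a, d, hd, rfl⟩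
    have hdQ : ((d : ℚ)) ≠ 0 := Int.cast_ne_zero.mpr hd
    refine ⟨(d : ℚ)⁻¹, -(a : ℚ) / d, by positivity, ?_⟩
    simp only [Finset.image_insert, Finset.image_singleton]
    push_cast
    rw [show ((d:ℚ))⁻¹ * (a:ℚ) + -(a:ℚ)/d = 0 by field_simp; ring,
        show ((d:ℚ))⁻¹ * ((a:ℚ) + d) + -(a:ℚ)/d = 1 by field_simp; ring,
        show ((d:ℚ))⁻¹ * ((a:ℚ) + k * d) + -(a:ℚ)/d = (k:ℚ) by field_simp; ring]

lemma bridge (x y z : ℤ) (hxy : x < y) (hyz : y < z)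
    (x1 y1 x2 y2 v : ℤ) (hv : v = 1 ∨ v = -1)
    (h1 : x1 = x ∨ x1 = y ∨ x1 = z) (h2 : y1 = x ∨ y1 = y ∨ y1 = z)
    (h3 : x2 = x ∨ x2 = y ∨ x2 = z) (h4 : y2 = x ∨ y2 = y ∨ y2 = z)
    (heq : 2 * x1 + v * y1 = 2 * x2 + v * y2) (hne : ¬(x1 = x2 ∧ y1 = y2)) :
    2 * y = x + z ∨ z - y = 2 * (y - x) ∨ y - x = 2 * (z - y) := by
  rcases hv with rfl | rfl <;>
    rcases h1 with rfl | rfl | rfl <;>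
    rcases h2 with rfl | rfl | rfl <;>
    rcases h3 with rfl | rfl | rfl <;>
    rcases h4 with rfl | rfl | rfl <;>
    omega

lemma main_iff (v : ℤ) (hv : v = 1 ∨ v = -1) (A : Finset ℤ) (hA : A.card = 3) :
    (binFormImage 2 v A).card < 9 ↔
      ∃ a d : ℤ, d ≠ 0 ∧ (A = {a, a + d, a + 2 * d} ∨ A = {a, a + d, a + 3 * d}) := by
  have h9 : (A ×ˢ A).card = 9 := by rw [Finset.card_product, hA]
  constructor
  · intro h
    obtain ⟨x, y, z, hxy, hyz, hAeq⟩ := three_sorted hA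
    have hninj : ¬ Set.InjOn (fun p : ℤ × ℤ => 2 * p.1 + v * p.2) ↑(A ×ˢ A) := by
      intro hinj
      have := Finset.card_image_of_injOn hinj
      rw [h9] at this
      have : (binFormImage 2 v A).card = 9 := this
      omega
    rw [Set.InjOn] at hninj
    push_neg at hninj
    obtain ⟨p1, hp1, p2, hp2, hfeq, hpne⟩ := hninj
    have hp1' := Finset.mem_product.mp (Finset.mem_coe.mp hp1)
    have hp2' := Finset.mem_product.mp (Finset.mem_coe.mp hp2)
    rw [hAeq] at hp1' hp2'
    simp only [Finset.mem_insert, Finset.mem_singleton] at hp1' hp2'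
    have hne : ¬(p1.1 = p2.1 ∧ p1.2 = p2.2) := by
      intro ⟨h1, h2⟩
      exact hpne (Prod.ext h1 h2)
    have hD := bridge x y z hxy hyz p1.1 p1.2 p2.1 p2.2 v hv
      hp1'.1 hp1'.2 hp2'.1 hp2'.2 hfeq hne
    rcases hD with hD | hD | hD
    · exact ⟨x, y - x, by omega, Or.inl (by rw [hAeq]; ext t; simp; omega)⟩
    · exact ⟨x, y - x, by omega, Or.inr (by rw [hAeq]; ext t; simp; omega)⟩
    · exact ⟨z, y - z, by omega, Or.inr (by rw [hAeq]; ext t; simp; omega)⟩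
  · rintro ⟨a, d, hd, (rfl | rfl)⟩
    · rcases hv with rfl | rfl
      · have := card_image_lt' (s := ({a, a + d, a + 2 * d} : Finset ℤ) ×ˢ {a, a + d, a + 2 * d})
          (f := fun p : ℤ × ℤ => 2 * p.1 + 1 * p.2)
          (p1 := (a + d, a)) (p2 := (a, a + 2 * d))
          (by simp [Finset.mem_product]) (by simp [Finset.mem_product])
          (by simp [Prod.ext_iff]; omega) (by simp; ring)
        calc (binFormImage 2 1 ({a, a + d, a + 2 * d} : Finset ℤ)).card
            < _ := this
          _ = 9 := h9
      · have := card_image_lt' (s := ({a, a + d, a + 2 * d} : Finset ℤ) ×ˢ {a, a + d, a + 2 * d})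
          (f := fun p : ℤ × ℤ => 2 * p.1 + (-1) * p.2)
          (p1 := (a + d, a + 2 * d)) (p2 := (a, a))
          (by simp [Finset.mem_product]) (by simp [Finset.mem_product])
          (by simp [Prod.ext_iff]; omega) (by simp; ring)
        calc (binFormImage 2 (-1) ({a, a + d, a + 2 * d} : Finset ℤ)).card
            < _ := this
          _ = 9 := h9
    · rcases hv with rfl | rfl
      · have := card_image_lt' (s := ({a, a + d, a + 3 * d} : Finset ℤ) ×ˢ {a, a + d, a + 3 * d})
          (f := fun p : ℤ × ℤ => 2 * p.1 + 1 * p.2)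
          (p1 := (a + d, a + d)) (p2 := (a, a + 3 * d))
          (by simp [Finset.mem_product]) (by simp [Finset.mem_product])
          (by simp [Prod.ext_iff]; omega) (by simp; ring)
        calc (binFormImage 2 1 ({a, a + d, a + 3 * d} : Finset ℤ)).card
            < _ := this
          _ = 9 := h9
      · have := card_image_lt' (s := ({a, a + d, a + 3 * d} : Finset ℤ) ×ˢ {a, a + d, a + 3 * d})
          (f := fun p : ℤ × ℤ => 2 * p.1 + (-1) * p.2)
          (p1 := (a + d, a + 3 * d)) (p2 := (a, a + d))
          (by simp [Finset.mem_product]) (by simp [Finset.mem_product])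
          (by simp [Prod.ext_iff]; omega) (by simp; ring)
        calc (binFormImage 2 (-1) ({a, a + d, a + 3 * d} : Finset ℤ)).card
            < _ := this
          _ = 9 := h9

theorem stmt_4 (v : ℤ) (hv : v = 1 ∨ v = -1) (A : Finset ℤ) (hA : A.card = 3) :
    ((binFormImage 2 v A).card < 9 ↔
      AffinelyEquivalent A ({0, 1, 2} : Finset ℤ) ∨
      AffinelyEquivalent A ({0, 1, 3} : Finset ℤ)) ∧
    (binFormImage 2 v ({0, 1, 2} : Finset ℤ)).card = 7 ∧
    (binFormImage 2 v ({0, 1, 3} : Finset ℤ)).card = 8 := by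
  refine ⟨?_, ?_, ?_⟩
  · rw [main_iff v hv A hA, affEquiv_char A 2, affEquiv_char A 3]
    constructor
    · rintro ⟨a, d, hd, (h | h)⟩
      · exact Or.inl ⟨a, d, hd, h⟩
      · exact Or.inr ⟨a, d, hd, h⟩
    · rintro (⟨a, d, hd, h⟩ | ⟨a, d, hd, h⟩)
      · exact ⟨a, d, hd, Or.inl h⟩
      · exact ⟨a, d, hd, Or.inr h⟩
  · rcases hv with rfl | rfl <;> decide
  · rcases hv with rfl | rfl <;> decide
end

section
/- Let u and v be integers with u > |v| ≥ 1 and gcd(u,v) = 1, and let f(x,y) = ux + vy and g(x,y) = ux − vy. Then |f(A)| = |g(A)| for every set A of integers with |A| = 3. -/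
open Finset

def collisionCount {α β : Type*} [DecidableEq β] (f : α → β) (s : Finset α) : ℕ :=
  #{pq ∈ s ×ˢ s | f pq.1 = f pq.2}

theorem collisionCount_eq_sum_sq {α β : Type*} [DecidableEq β] (f : α → β) (s : Finset α) :
    collisionCount f s = ∑ b ∈ s.image f, #{a ∈ s | f a = b} ^ 2 := by
  calc collisionCount f s = ∑ p ∈ s, #{q ∈ s | f q = f p} := by
        rw [collisionCount, card_filter, sum_product]
        simp only [card_filter, eq_comm]
    _ = ∑ b ∈ s.image f, #{a ∈ s | f a = b} ^ 2 := by
        rw [sum_comp (fun b => #{q ∈ s | f q = b}) f]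
        simp only [smul_eq_mul, sq]

theorem collisionCount_add_two_mul_card_image {α β : Type*} [DecidableEq β] {f : α → β}
    {s : Finset α} (hf : ∀ b, #{a ∈ s | f a = b} ≤ 2) :
    collisionCount f s + 2 * #(s.image f) = 3 * #s := by
  rw [collisionCount_eq_sum_sq, card_eq_sum_card_image f s, card_eq_sum_ones (s.image f),
    mul_sum, mul_sum, ← sum_add_distrib]
  refine sum_congr rfl fun b hb => ?_
  have hpos : 0 < #{a ∈ s | f a = b} := by
    obtain ⟨a, ha, rfl⟩ := mem_image.mp hb
    exact card_pos.mpr ⟨a, mem_filter.mpr ⟨ha, rfl⟩⟩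
  have hle := hf b
  interval_cases #{a ∈ s | f a = b} <;> rfl

theorem collisionCount_linearForm_neg (u v : ℤ) (A : Finset ℤ) :
    collisionCount (fun p : ℤ × ℤ => u * p.1 + v * p.2) (A ×ˢ A) =
      collisionCount (fun p : ℤ × ℤ => u * p.1 + -v * p.2) (A ×ˢ A) := by
  unfold collisionCount
  refine card_nbij' (fun pq => ((pq.1.1, pq.2.2), (pq.2.1, pq.1.2)))
    (fun pq => ((pq.1.1, pq.2.2), (pq.2.1, pq.1.2))) ?_ ?_ (fun _ _ => rfl) (fun _ _ => rfl)
  all_goals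
    rintro ⟨⟨x₁, y₁⟩, ⟨x₂, y₂⟩⟩
    simp only [coe_filter, Set.mem_ofPred_eq, mem_product]
    rintro ⟨⟨⟨hx₁, hy₁⟩, hx₂, hy₂⟩, h⟩
    exact ⟨⟨⟨hx₁, hy₂⟩, hx₂, hy₁⟩, by linear_combination h⟩

theorem card_fiber_linearForm_lt {u v : ℤ} (hv : v ≠ 0) (huv : |v| < |u|) {A : Finset ℤ}
    (hA : 1 < #A) (z : ℤ) : #{p ∈ A ×ˢ A | u * p.1 + v * p.2 = z} < #A := by
  set S := {p ∈ A ×ˢ A | u * p.1 + v * p.2 = z}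
  by_contra! hS
  have hA₀ : A.Nonempty := card_pos.mp (by omega)
  have hinj : Set.InjOn Prod.fst (S : Set (ℤ × ℤ)) := by
    rintro ⟨x, y⟩ hp ⟨x', y'⟩ hq (rfl : x = x')
    simp only [S, coe_filter, Set.mem_ofPred_eq] at hp hq
    have hvy : v * (y - y') = 0 := by linear_combination hp.2 - hq.2
    simp [sub_eq_zero.mp ((mul_eq_zero.mp hvy).resolve_left hv)]
  have hproj : S.image Prod.fst = A := by
    refine eq_of_subset_of_card_le (fun x hx => ?_) (by rwa [card_image_of_injOn hinj])
    obtain ⟨p, hp, rfl⟩ := mem_image.mp hx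
    exact (mem_product.mp (mem_filter.mp hp).1).1
  obtain ⟨⟨m, y₁⟩, hp₁, hm⟩ := mem_image.mp (hproj.symm ▸ min'_mem A hA₀ :
    A.min' hA₀ ∈ S.image Prod.fst)
  obtain ⟨⟨M, y₂⟩, hp₂, hM⟩ := mem_image.mp (hproj.symm ▸ max'_mem A hA₀ :
    A.max' hA₀ ∈ S.image Prod.fst)
  simp only [S, mem_filter, mem_product] at hp₁ hp₂
  subst hm hM
  have hlt : 0 < A.max' hA₀ - A.min' hA₀ := sub_pos.mpr (min'_lt_max'_of_card A hA)
  have hspread : |y₁ - y₂| ≤ A.max' hA₀ - A.min' hA₀ := abs_sub_le_of_le_of_le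
    (min'_le A _ hp₁.1.2) (le_max' A _ hp₁.1.2) (min'_le A _ hp₂.1.2) (le_max' A _ hp₂.1.2)
  have hcollide : u * (A.max' hA₀ - A.min' hA₀) = v * (y₁ - y₂) := by
    linear_combination hp₂.2 - hp₁.2
  have habs := congrArg abs hcollide
  rw [abs_mul, abs_mul, abs_of_pos hlt] at habs
  nlinarith [abs_nonneg v]

theorem stmt_5_general (u v : ℤ) (h2 : |v| < u)
    (A : Finset ℤ) (hA : A.card = 3) :
    (binFormImage u v A).card = (binFormImage u (-v) A).card := by
  rcases eq_or_ne v 0 with rfl | hv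
  · rw [neg_zero]
  have fiber_le_two : ∀ w : ℤ, w ≠ 0 → |w| < |u| →
      ∀ z, #{p ∈ A ×ˢ A | u * p.1 + w * p.2 = z} ≤ 2 := fun w hw hwu z => by
    have := card_fiber_linearForm_lt hw hwu (by omega : 1 < #A) z
    omega
  have hu : |v| < |u| := h2.trans_le (le_abs_self u)
  have hf := collisionCount_add_two_mul_card_image (fiber_le_two v hv hu)
  have hg := collisionCount_add_two_mul_card_image
    (fiber_le_two (-v) (neg_ne_zero.mpr hv) (by rwa [abs_neg]))
  rw [collisionCount_linearForm_neg] at hf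
  unfold binFormImage
  omega

theorem stmt_5 (u v : ℤ) (h1 : 1 ≤ |v|) (h2 : |v| < u) (h3 : Int.gcd u v = 1)
    (A : Finset ℤ) (hA : A.card = 3) :
    (binFormImage u v A).card = (binFormImage u (-v) A).card :=
  stmt_5_general u v h2 A hA
end

section
/- Let f(x,y) = u_1x + v_1y and g(x,y) = u_2x + v_2y be binary linear forms with integer coefficients satisfying u_1 ≥ |v_1| ≥ 1, gcd(u_1,v_1) = 1, u_2 ≥ |v_2| ≥ 1, gcd(u_2,v_2) = 1, u_1 ≥ 2, u_2 ≥ 2, and (u_1, |v_1|) ≠ (u_2, |v_2|). Then there exist sets A and B of integers with |A| = |B| = 3 such that |f(A)| < |g(A)| and |f(B)| > |g(B)|. -/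
open Finset

def binForm (u v : ℤ) (p : ℤ × ℤ) : ℤ := u * p.1 + v * p.2

theorem binFormImage_eq_image (u v : ℤ) (A : Finset ℤ) :
    binFormImage u v A = (A ×ˢ A).image (binForm u v) := rfl

theorem card_binFormImage_lt {u₁ v₁ u₂ v₂ : ℤ} {A : Finset ℤ}
    (hf : ¬ Set.InjOn (binForm u₁ v₁) ↑(A ×ˢ A)) (hg : Set.InjOn (binForm u₂ v₂) ↑(A ×ˢ A)) :
    (binFormImage u₁ v₁ A).card < (binFormImage u₂ v₂ A).card := by
  rw [binFormImage_eq_image, binFormImage_eq_image, card_image_of_injOn hg]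
  exact lt_of_le_of_ne card_image_le (mt card_image_iff.mp hf)

theorem not_injOn_binForm {a v y : ℤ} {A : Finset ℤ} (hv : v ≠ 0) (h0 : 0 ∈ A)
    (hvA : |v| ∈ A) (hy : y ∈ A) (hya : y + a ∈ A) :
    ¬ Set.InjOn (binForm a v) ↑(A ×ˢ A) := by
  have habs : 0 < |v| := abs_pos.mpr hv
  rcases abs_choice v with hvv | hvv
  · intro hinj
    have := @hinj (|v|, y) (by simp [hvA, hy]) (0, y + a) (by simp [h0, hya])
      (by simp only [binForm]; rw [hvv]; ring)
    simp only [Prod.mk.injEq] at this; omega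
  · intro hinj
    have := @hinj (|v|, y + a) (by simp [hvA, hya]) (0, y) (by simp [h0, hy])
      (by simp only [binForm]; rw [hvv]; ring)
    simp only [Prod.mk.injEq] at this; omega

theorem Int.eq_and_eq_of_mul_eq_mul_of_isCoprime {c d D E : ℤ} (hc : 0 < c) (hE : 0 < E)
    (hcd : IsCoprime c d) (hDE : IsCoprime D E) (h : c * D = d * E) : c = E ∧ d = D := by
  have hcE : c ∣ E := hcd.dvd_of_dvd_mul_left ⟨D, by linarith⟩
  have hEc : E ∣ c := hDE.symm.dvd_of_dvd_mul_right ⟨d, by linarith⟩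
  have hc_eq : c = E := Int.dvd_antisymm hc.le hE.le hcE hEc
  subst hc_eq
  exact ⟨rfl, (mul_left_cancel₀ hc.ne' (h.trans (mul_comm d c))).symm⟩

theorem abs_sub_mem_of_mem_triple {b q x x' : ℤ} (hb : 0 < b) (hbq : b < q)
    (hx : x ∈ ({0, b, q} : Finset ℤ)) (hx' : x' ∈ ({0, b, q} : Finset ℤ)) (hne : x ≠ x') :
    |x - x'| ∈ ({b, q - b, q} : Finset ℤ) := by
  simp only [mem_insert, mem_singleton] at hx hx' ⊢
  rcases hx with rfl | rfl | rfl <;> rcases hx' with rfl | rfl | rfl <;>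
    first | exact absurd rfl hne | (rw [abs_eq_max_neg]; omega)

theorem isCoprime_of_mem_triple {b q D E : ℤ} (hqb : IsCoprime q b)
    (hD : D ∈ ({b, q - b, q} : Finset ℤ)) (hE : E ∈ ({b, q - b, q} : Finset ℤ)) (hDE : D ≠ E) :
    IsCoprime D E := by
  obtain ⟨s, t, hst⟩ := hqb
  simp only [mem_insert, mem_singleton] at hD hE
  rcases hD with rfl | rfl | rfl <;> rcases hE with rfl | rfl | rfl
  all_goals first
    | exact absurd rfl hDE
    | exact ⟨t, s, by linear_combination hst⟩
    | exact ⟨s, t, by linear_combination hst⟩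
    | exact ⟨s + t, s, by linear_combination hst⟩
    | exact ⟨s, s + t, by linear_combination hst⟩
    | exact ⟨-t, s + t, by linear_combination hst⟩
    | exact ⟨s + t, -t, by linear_combination hst⟩

theorem injOn_binForm_triple {c v b q : ℤ} (hcv : IsCoprime c v) (hvc : |v| < c) (hv : v ≠ 0)
    (hb : 0 < b) (hbq : b < q) (hqb : IsCoprime q b)
    (hpair : ∀ D ∈ ({b, q - b, q} : Finset ℤ), ∀ E ∈ ({b, q - b, q} : Finset ℤ),
      (c, |v|) ≠ (E, D)) :
    Set.InjOn (binForm c v) ↑(({0, b, q} : Finset ℤ) ×ˢ {0, b, q}) := by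
  rintro ⟨x, y⟩ hxy ⟨x', y'⟩ hxy' hfxy
  simp only [coe_product, Set.mem_prod, mem_coe] at hxy hxy'
  have hc : 0 < c := (abs_nonneg v).trans_lt hvc
  have hlin : c * (x - x') = v * (y' - y) := by simp only [binForm] at hfxy; linarith
  by_cases hx : x = x'
  · subst hx
    have : y' - y = 0 := by simpa [hv] using hlin.symm
    simp only [Prod.mk.injEq, true_and]; omega
  have habs : c * |x - x'| = |v| * |y' - y| := by
    rw [← abs_of_pos hc, ← abs_mul, ← abs_mul, hlin]
  have hD := abs_sub_mem_of_mem_triple hb hbq hxy.1 hxy'.1 hx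
  have hy : y' ≠ y := by
    rintro rfl
    simp only [sub_self, abs_zero, mul_zero, mul_eq_zero, abs_eq_zero, sub_eq_zero] at habs
    omega
  have hE := abs_sub_mem_of_mem_triple hb hbq hxy'.2 hxy.2 hy
  by_cases hDE : |x - x'| = |y' - y|
  · rw [hDE] at habs
    have := mul_right_cancel₀ (abs_pos.mpr (sub_ne_zero.mpr hy)).ne' habs
    omega
  obtain ⟨hcE, hvD⟩ := Int.eq_and_eq_of_mul_eq_mul_of_isCoprime hc
    (abs_pos.mpr (sub_ne_zero.mpr hy)) hcv.abs_right (isCoprime_of_mem_triple hqb hD hE hDE) habs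
  exact absurd (Prod.ext hcE hvD) (hpair _ hD _ hE)

theorem exists_triple_avoiding_pair {a b c d : ℤ} (hb : 0 < b) (hba : b < a) (hdc : d < c)
    (hne : (a, b) ≠ (c, d)) :
    ∃ q ∈ ({a, a + b} : Finset ℤ), ∀ D ∈ ({b, q - b, q} : Finset ℤ),
      ∀ E ∈ ({b, q - b, q} : Finset ℤ), (c, d) ≠ (E, D) := by
  by_contra! h
  obtain ⟨D, hD, E, hE, hcd⟩ := h a (by simp)
  obtain ⟨D', hD', E', hE', hcd'⟩ := h (a + b) (by simp)
  simp only [mem_insert, mem_singleton, Prod.mk.injEq, ne_eq] at hD hE hD' hE' hcd hcd' hne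
  omega

theorem abs_lt_of_isCoprime {u v : ℤ} (hu : 2 ≤ u) (hvu : |v| ≤ u) (h : IsCoprime u v) :
    |v| < u := by
  refine lt_of_le_of_ne hvu fun hvu => ?_
  have := Int.isUnit_iff.mp (h.isUnit_of_dvd' dvd_rfl (hvu ▸ abs_dvd_self v))
  omega

theorem exists_card_binFormImage_lt {u₁ v₁ u₂ v₂ : ℤ} (hv₁ : v₁ ≠ 0) (hvu₁ : |v₁| < u₁)
    (hv₂ : v₂ ≠ 0) (hvu₂ : |v₂| < u₂) (hco₁ : IsCoprime u₁ v₁) (hco₂ : IsCoprime u₂ v₂)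
    (hne : (u₁, |v₁|) ≠ (u₂, |v₂|)) :
    ∃ A : Finset ℤ, A.card = 3 ∧ (binFormImage u₁ v₁ A).card < (binFormImage u₂ v₂ A).card := by
  have hb : 0 < |v₁| := abs_pos.mpr hv₁
  obtain ⟨q, hq, hpair⟩ := exists_triple_avoiding_pair hb hvu₁ hvu₂ hne
  simp only [mem_insert, mem_singleton] at hq
  have hbq : |v₁| < q := by omega
  have hqb : IsCoprime q |v₁| := by
    rcases hq with rfl | rfl
    · exact hco₁.abs_right
    · simpa using hco₁.abs_right.add_mul_left_left 1
  refine ⟨{0, |v₁|, q}, card_eq_three.mpr ⟨0, |v₁|, q, by omega, by omega, by omega, rfl⟩,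
    card_binFormImage_lt ?_ (injOn_binForm_triple hco₂ hvu₂ hv₂ hb hbq hqb hpair)⟩
  rcases hq with rfl | rfl
  · exact not_injOn_binForm (y := 0) hv₁ (by simp) (by simp) (by simp) (by simp)
  · exact not_injOn_binForm (y := |v₁|) hv₁ (by simp) (by simp) (by simp) (by simp [add_comm])

theorem stmt_7 (u₁ v₁ u₂ v₂ : ℤ)
    (h11 : 1 ≤ |v₁|) (h12 : |v₁| ≤ u₁) (h13 : Int.gcd u₁ v₁ = 1)
    (h21 : 1 ≤ |v₂|) (h22 : |v₂| ≤ u₂) (h23 : Int.gcd u₂ v₂ = 1)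
    (hu₁ : 2 ≤ u₁) (hu₂ : 2 ≤ u₂)
    (hne : (u₁, |v₁|) ≠ (u₂, |v₂|)) :
    ∃ A B : Finset ℤ, A.card = 3 ∧ B.card = 3 ∧
      (binFormImage u₁ v₁ A).card < (binFormImage u₂ v₂ A).card ∧
      (binFormImage u₁ v₁ B).card > (binFormImage u₂ v₂ B).card := by
  have hco₁ := Int.isCoprime_iff_gcd_eq_one.mpr h13
  have hco₂ := Int.isCoprime_iff_gcd_eq_one.mpr h23
  have hv₁ : v₁ ≠ 0 := abs_pos.mp (by omega)
  have hv₂ : v₂ ≠ 0 := abs_pos.mp (by omega)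
  have hvu₁ := abs_lt_of_isCoprime hu₁ h12 hco₁
  have hvu₂ := abs_lt_of_isCoprime hu₂ h22 hco₂
  obtain ⟨A, hA, hAlt⟩ := exists_card_binFormImage_lt hv₁ hvu₁ hv₂ hvu₂ hco₁ hco₂ hne
  obtain ⟨B, hB, hBlt⟩ := exists_card_binFormImage_lt hv₂ hvu₂ hv₁ hvu₁ hco₂ hco₁ hne.symm
  exact ⟨A, B, hA, hB, hAlt, hBlt⟩
end

section
/- Let u and v be relatively prime integers with u > v ≥ 1, and let f(x,y) = ux + vy and g(x,y) = ux − vy. If A is an arithmetic progression of integers of length t with 1 ≤ t ≤ u, then |f(A)| = |g(A)| = t². -/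
open Finset

theorem injOn_binForm_of_isCoprime {u w : ℤ} (hcop : IsCoprime u w) {A : Finset ℤ}
    (hA : ∀ x ∈ A, ∀ y ∈ A, |x - y| < |u|) :
    Set.InjOn (fun p : ℤ × ℤ => u * p.1 + w * p.2) (A ×ˢ A : Finset (ℤ × ℤ)) := by
  rintro ⟨x, y⟩ hp ⟨x', y'⟩ hq (h : u * x + w * y = u * x' + w * y')
  simp only [coe_product, Set.mem_prod, mem_coe] at hp hq
  have hdvd : u ∣ w * (y - y') := ⟨x' - x, by linarith⟩
  have hy : y = y' := sub_eq_zero.1 <|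
    Int.eq_zero_of_abs_lt_dvd ((abs_dvd _ _).2 (hcop.dvd_of_dvd_mul_left hdvd)) (hA y hp.2 y' hq.2)
  have hu : u ≠ 0 := abs_pos.1 (by simpa using hA x hp.1 x hp.1)
  have hx : x = x' := mul_left_cancel₀ hu (by subst hy; linarith)
  rw [hx, hy]

theorem card_binFormImage_of_isCoprime {u w : ℤ} (hcop : IsCoprime u w) {A : Finset ℤ}
    (hA : ∀ x ∈ A, ∀ y ∈ A, |x - y| < |u|) :
    (binFormImage u w A).card = A.card ^ 2 := by
  rw [binFormImage, card_image_of_injOn (injOn_binForm_of_isCoprime hcop hA), card_product, sq]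

theorem binFormImage_image_affine (u w a d : ℤ) (A : Finset ℤ) :
    binFormImage u w (A.image fun x => a + x * d) =
      (binFormImage u w A).image fun z => (u + w) * a + z * d := by
  ext z
  simp only [binFormImage, mem_image, mem_product, Prod.exists]
  constructor
  · rintro ⟨_, _, ⟨⟨x, hx, rfl⟩, ⟨y, hy, rfl⟩⟩, rfl⟩
    exact ⟨_, ⟨x, y, ⟨hx, hy⟩, rfl⟩, by ring⟩
  · rintro ⟨_, ⟨x, y, ⟨hx, hy⟩, rfl⟩, rfl⟩
    exact ⟨_, _, ⟨⟨x, hx, rfl⟩, ⟨y, hy, rfl⟩⟩, by ring⟩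

theorem card_binFormImage_image_affine (u w a : ℤ) {d : ℤ} (hd : d ≠ 0) (A : Finset ℤ) :
    (binFormImage u w (A.image fun x => a + x * d)).card = (binFormImage u w A).card := by
  rw [binFormImage_image_affine]
  exact card_image_of_injective _ fun z z' h => mul_right_cancel₀ hd (add_left_cancel h)

theorem card_binFormImage_arithProg {u w : ℤ} (hcop : IsCoprime u w) {t : ℕ} (ht : (t : ℤ) ≤ u)
    (a : ℤ) {d : ℤ} (hd : d ≠ 0) :
    (binFormImage u w ((range t).image fun i : ℕ => a + (i : ℤ) * d)).card = t ^ 2 := by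
  have hdiam : ∀ x ∈ (range t).image (Nat.cast : ℕ → ℤ), ∀ y ∈ (range t).image (Nat.cast : ℕ → ℤ),
      |x - y| < |u| := by
    simp only [mem_image, mem_range]
    rintro _ ⟨i, hi, rfl⟩ _ ⟨j, hj, rfl⟩
    have := le_abs_self u
    rw [abs_sub_lt_iff]
    omega
  have hAP : (range t).image (fun i : ℕ => a + (i : ℤ) * d) =
      ((range t).image (Nat.cast : ℕ → ℤ)).image fun x => a + x * d := by
    rw [image_image]; rfl
  rw [hAP, card_binFormImage_image_affine u w a hd,
    card_binFormImage_of_isCoprime hcop hdiam, card_image_of_injective _ Nat.cast_injective,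
    card_range]

theorem stmt_10_general (u v : ℤ) (hcop : Int.gcd u v = 1)
    (t : ℕ) (ht : (t : ℤ) ≤ u) (a d : ℤ) (hd : d ≠ 0)
    (A : Finset ℤ) (hA : A = (Finset.range t).image fun i : ℕ => a + (i : ℤ) * d) :
    (binFormImage u v A).card = t ^ 2 ∧ (binFormImage u (-v) A).card = t ^ 2 := by
  have hc : IsCoprime u v := Int.isCoprime_iff_gcd_eq_one.2 hcop
  subst hA
  exact ⟨card_binFormImage_arithProg hc ht a hd, card_binFormImage_arithProg hc.neg_right ht a hd⟩

theorem stmt_10 (u v : ℤ) (hv : 1 ≤ v) (huv : v < u) (hcop : Int.gcd u v = 1)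
    (t : ℕ) (ht1 : 1 ≤ t) (ht : (t : ℤ) ≤ u) (a d : ℤ) (hd : d ≠ 0)
    (A : Finset ℤ) (hA : A = (Finset.range t).image fun i : ℕ => a + (i : ℤ) * d) :
    (binFormImage u v A).card = t ^ 2 ∧ (binFormImage u (-v) A).card = t ^ 2 :=
  stmt_10_general u v hcop t ht a d hd A hA
end

section
/- Let p be a prime number and let u and v be integers not divisible by p. Let H be a subgroup of the multiplicative group of the field ℤ/pℤ of order n ≥ 2, and let k = (p − 1)/n be its index. If p > k⁴, then every nonzero element of ℤ/pℤ can be represented in the form u·h_1 + v·h_2 with h_1, h_2 ∈ H. -/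
open Finset Complex

section aux
variable {p : ℕ} [Fact p.Prime]

lemma aux_norm_one (χ : MulChar (ZMod p) ℂ) {a : ZMod p} (ha : a ≠ 0) : ‖χ a‖ = 1 := by
  have h1 : χ a ^ (p - 1) = 1 := by
    rw [← map_pow, ZMod.pow_card_sub_one_eq_one ha, map_one]
  exact Complex.norm_eq_one_of_pow_eq_one h1 (by
    have := (Fact.out : p.Prime).two_le; omega)

lemma aux_jacobi_norm_le (χ φ : MulChar (ZMod p) ℂ) (h : ¬(χ = 1 ∧ φ = 1)) :
    ‖jacobiSum χ φ‖ ≤ Real.sqrt p := by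
  have hp2 := (Fact.out : p.Prime).two_le
  have h1le : (1 : ℝ) ≤ Real.sqrt p := by
    rw [show (1:ℝ) = Real.sqrt 1 by simp]
    exact Real.sqrt_le_sqrt (by exact_mod_cast Nat.one_le_of_lt hp2)
  by_cases hχ : χ = 1
  · have hφ : φ ≠ 1 := fun hh => h ⟨hχ, hh⟩
    rw [hχ, jacobiSum_one_nontrivial hφ]
    simpa using h1le
  · by_cases hφ : φ = 1
    · rw [hφ, jacobiSum_comm, jacobiSum_one_nontrivial hχ]
      simpa using h1le
    · by_cases hχφ : χ * φ = 1
      · have hφ' : φ = χ⁻¹ := by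
          rw [eq_inv_iff_mul_eq_one, mul_comm]; exact hχφ
        rw [hφ', jacobiSum_nontrivial_inv hχ, norm_neg,
          aux_norm_one χ (by
            have : (1:ZMod p) ≠ 0 := one_ne_zero
            intro hh
            simp only [neg_eq_zero] at hh
            exact this (by simpa using hh))]
        exact h1le
      · -- |J|^2 = p
        have hcc : (starRingEnd ℂ) (jacobiSum χ φ) = jacobiSum χ⁻¹ φ⁻¹ := by
          rw [jacobiSum, map_sum]
          refine Finset.sum_congr rfl fun t _ => ?_
          rw [map_mul]
          rw [show (starRingEnd ℂ) (χ t) = χ⁻¹ t from MulChar.star_apply' χ t,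
            show (starRingEnd ℂ) (φ (1 - t)) = φ⁻¹ (1 - t) from MulChar.star_apply' φ (1 - t)]
        have hJJ : jacobiSum χ φ * jacobiSum χ⁻¹ φ⁻¹ = (Fintype.card (ZMod p) : ℂ) :=
          jacobiSum_mul_jacobiSum_inv (by
            rw [ringChar.eq_zero, ZMod.ringChar_zmod_n]
            exact fun hh => by simp [← hh] at hp2) hχ hφ hχφ
        have hns : Complex.normSq (jacobiSum χ φ) = (p : ℝ) := by
          have h2 := hJJ
          rw [← hcc, Complex.mul_conj, ZMod.card] at h2
          exact_mod_cast h2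
        rw [show ‖jacobiSum χ φ‖ = Real.sqrt (Complex.normSq (jacobiSum χ φ)) from by
          rw [Complex.norm_def], hns]
end aux

section aux2
variable {p : ℕ} [Fact p.Prime]

lemma aux_T (χ φ : MulChar (ZMod p) ℂ) {u v x : ZMod p} (hu : u ≠ 0) (hv : v ≠ 0) (hx : x ≠ 0) :
    ∑ a : ZMod p, ∑ b : ZMod p, (if u * a + v * b = x then χ a * φ b else 0)
      = (χ u)⁻¹ * (φ v)⁻¹ * ((χ * φ) x) * jacobiSum χ φ := by
  have hcond : ∀ a b : ZMod p, (u * a + v * b = x) ↔ b = v⁻¹ * (x - u * a) := by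
    intro a b
    constructor
    · intro h
      field_simp
      linear_combination h
    · intro h
      field_simp at h
      linear_combination h
  have step1 : ∀ a : ZMod p, ∑ b : ZMod p, (if u * a + v * b = x then χ a * φ b else 0)
      = χ a * φ (v⁻¹ * (x - u * a)) := by
    intro a
    rw [Finset.sum_congr rfl (fun b _ => by rw [if_congr (hcond a b) rfl rfl])]
    simp [Finset.sum_ite_eq']
  simp_rw [step1]
  have hux : u⁻¹ * x ≠ 0 := mul_ne_zero (inv_ne_zero hu) hx
  have hinvu : χ u⁻¹ = (χ u)⁻¹ := by
    rw [← MulChar.inv_apply', MulChar.inv_apply_eq_inv']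
  have hinvv : φ v⁻¹ = (φ v)⁻¹ := by
    rw [← MulChar.inv_apply', MulChar.inv_apply_eq_inv']
  have key := Fintype.sum_bijective (fun t : ZMod p => u⁻¹ * x * t)
    (Equiv.mulLeft₀ (u⁻¹ * x) hux).bijective
    (fun t : ZMod p => ((χ u)⁻¹ * (φ v)⁻¹ * ((χ * φ) x)) * (χ t * φ (1 - t)))
    (fun a : ZMod p => χ a * φ (v⁻¹ * (x - u * a)))
    (fun t => by
      have h1 : v⁻¹ * (x - u * (u⁻¹ * x * t)) = v⁻¹ * (x * (1 - t)) := by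
        field_simp
      beta_reduce
      rw [h1, map_mul χ, map_mul χ, map_mul φ, map_mul φ, hinvu, hinvv,
        MulChar.mul_apply]
      ring)
  rw [← key, ← Finset.mul_sum, jacobiSum]

end aux2

section aux3
variable {p : ℕ} [Fact p.Prime]

lemma aux_ker (χ : MulChar (ZMod p) ℂ) (hord : orderOf χ = p - 1)
    {a : (ZMod p)ˣ} (ha : χ (a : ZMod p) = 1) : a = 1 := by
  have hp2 := (Fact.out : p.Prime).two_le
  set K := χ.toUnitHom.ker with hK
  set m := Nat.card ((ZMod p)ˣ ⧸ K) with hm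
  have hm1 : χ ^ m = 1 := by
    apply MulChar.ext
    intro b
    rw [MulChar.pow_apply_coe, MulChar.one_apply_coe]
    have hbm : b ^ m ∈ K := by
      rw [← QuotientGroup.eq_one_iff, QuotientGroup.mk_pow]
      exact pow_card_eq_one'
    have : χ.toUnitHom (b ^ m) = 1 := hbm
    calc χ (b : ZMod p) ^ m = χ ((b : ZMod p) ^ m) := by rw [map_pow]
    _ = χ ((b ^ m : (ZMod p)ˣ) : ZMod p) := by rw [Units.val_pow_eq_pow_val]
    _ = ((χ.toUnitHom (b ^ m) : ℂˣ) : ℂ) := (MulChar.coe_toUnitHom χ _).symm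
    _ = 1 := by rw [this, Units.val_one]
  have hdvd : p - 1 ∣ m := by
    rw [← hord]
    exact orderOf_dvd_of_pow_eq_one hm1
  have hcard : m * Nat.card K = p - 1 := by
    rw [← Subgroup.card_eq_card_quotient_mul_card_subgroup K, Nat.card_eq_fintype_card,
      ZMod.card_units]
  have hKpos : 0 < Nat.card K := Nat.card_pos
  have hmpos : 0 < m := Nat.card_pos
  have hK1 : Nat.card K = 1 := by
    have hmle : m ≤ p - 1 := Nat.le_of_dvd (by omega) ⟨Nat.card K, hcard.symm⟩
    have hge : p - 1 ≤ m := Nat.le_of_dvd hmpos hdvd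
    have hm_eq : m = p - 1 := le_antisymm hmle hge
    rw [hm_eq] at hcard
    have h2 : (p - 1) * Nat.card K = (p - 1) * 1 := by rw [mul_one, hcard]
    exact Nat.eq_of_mul_eq_mul_left (by omega) h2
  have hKbot : K = ⊥ := Subgroup.card_eq_one.mp hK1
  have haK : a ∈ K := by
    show χ.toUnitHom a = 1
    apply Units.ext
    rw [MulChar.coe_toUnitHom, ha, Units.val_one]
  rw [hKbot] at haK
  exact haK

lemma aux_memH (H : Subgroup (ZMod p)ˣ) {n : ℕ} (hn : 0 < n)
    (hcard : Nat.card H = n) {a : (ZMod p)ˣ} : a ∈ H ↔ a ^ n = 1 := by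
  classical
  have fwd : ∀ b : (ZMod p)ˣ, b ∈ H → b ^ n = 1 := by
    intro b hb
    have h1 : (⟨b, hb⟩ : H) ^ n = 1 := by rw [← hcard]; exact pow_card_eq_one'
    have := congrArg (Subgroup.subtype H) h1
    simpa using this
  constructor
  · exact fwd a
  · intro ha
    have hS : #{b : (ZMod p)ˣ | b ^ n = 1} ≤ n := IsCyclic.card_pow_eq_one_le hn
    have hsub : Finset.univ.filter (fun b : (ZMod p)ˣ => b ∈ H) ⊆
        Finset.univ.filter (fun b : (ZMod p)ˣ => b ^ n = 1) := by
      intro b hb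
      simp only [Finset.mem_filter, Finset.mem_univ, true_and] at hb ⊢
      exact fwd b hb
    have hcards : n ≤ (Finset.univ.filter (fun b : (ZMod p)ˣ => b ∈ H)).card := by
      rw [← hcard, Nat.card_eq_fintype_card, Fintype.card_subtype]
    have heq := Finset.eq_of_subset_of_card_le hsub (le_trans hS hcards)
    have : a ∈ Finset.univ.filter (fun b : (ZMod p)ˣ => b ^ n = 1) := by
      simp only [Finset.mem_filter, Finset.mem_univ, true_and]; exact ha
    rw [← heq] at this
    simpa using this

end aux3

lemma aux_ineq {p k : ℕ} (hk : 1 ≤ k) (hp4 : k ^ 4 < p) (hpk : 2 * k + 1 ≤ p) :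
    ((k * k - 1 : ℕ) : ℝ) * Real.sqrt p < (p : ℝ) - 2 := by
  have hkk : 1 ≤ k * k := Nat.one_le_iff_ne_zero.mpr (by positivity)
  have hc : ((k * k - 1 : ℕ) : ℝ) = (k : ℝ) * k - 1 := by
    push_cast [hkk]
    ring
  set s := Real.sqrt p with hs
  have hs0 : 0 ≤ s := Real.sqrt_nonneg _
  have hss : s * s = p := Real.mul_self_sqrt (by positivity)
  have hks : (k : ℝ) ^ 2 < s := by
    rw [hs, show Real.sqrt p = Real.sqrt p from rfl]
    rw [Real.lt_sqrt (by positivity)]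
    have h4 : ((k : ℝ) ^ 2) ^ 2 = ((k ^ 4 : ℕ) : ℝ) := by push_cast; ring
    rw [h4]
    exact_mod_cast hp4
  have hpk' : (2 * (k : ℝ) + 1) ≤ p := by exact_mod_cast hpk
  rw [hc]
  rcases le_or_gt 2 k with h2 | h2
  · have h2' : (2 : ℝ) ≤ k := by exact_mod_cast h2
    nlinarith [mul_nonneg hs0 (sub_nonneg.2 hks.le), hks, hss, h2']
  · have hk1 : k = 1 := by omega
    subst hk1
    simp only [Nat.cast_one]
    nlinarith [hss, hpk']

theorem stmt_18 (p : ℕ) [Fact p.Prime] (u v : ℤ)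
    (hu : ¬ (p : ℤ) ∣ u) (hv : ¬ (p : ℤ) ∣ v)
    (H : Subgroup (ZMod p)ˣ) (n : ℕ) (hn : 2 ≤ n) (hcard : Nat.card H = n)
    (k : ℕ) (hk : k = (p - 1) / n) (hp : k ^ 4 < p) :
    ∀ x : ZMod p, x ≠ 0 →
      ∃ h₁ ∈ H, ∃ h₂ ∈ H,
        (u : ZMod p) * (h₁ : (ZMod p)ˣ) + (v : ZMod p) * (h₂ : (ZMod p)ˣ) = x := by
  classical
  have hp' : p.Prime := Fact.out
  have hp2 := hp'.two_le
  intro x hx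
  set u' : ZMod p := (u : ZMod p) with hu'def
  set v' : ZMod p := (v : ZMod p) with hv'def
  have hu0 : u' ≠ 0 := fun h => hu ((ZMod.intCast_zmod_eq_zero_iff_dvd u p).mp h)
  have hv0 : v' ≠ 0 := fun h => hv ((ZMod.intCast_zmod_eq_zero_iff_dvd v p).mp h)
  have hndvd : n ∣ p - 1 := by
    have h1 := Subgroup.card_subgroup_dvd_card H
    rwa [hcard, Nat.card_eq_fintype_card, ZMod.card_units] at h1
  have hnk : n * k = p - 1 := by rw [hk]; exact Nat.mul_div_cancel' hndvd
  have hk1 : 1 ≤ k := by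
    rcases Nat.eq_zero_or_pos k with h0 | h
    · subst h0; simp at hnk; omega
    · exact h
  have hn0 : 0 < n := by omega
  obtain ⟨χ₀, hχ₀⟩ := MulChar.exists_mulChar_orderOf (ZMod p) (n := p - 1)
    (by rw [ZMod.card]) (Complex.isPrimitiveRoot_exp (p - 1) (by omega))
  have htriv : ∀ j : ℕ, χ₀ ^ (n * j) = 1 ↔ k ∣ j := by
    intro j
    rw [← orderOf_dvd_iff_pow_eq_one, hχ₀, ← hnk]
    exact Nat.mul_dvd_mul_iff_left hn0
  set P : ZMod p → Prop := fun c => ∃ a : (ZMod p)ˣ, a ∈ H ∧ (a : ZMod p) = c with hP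
  have hInd : ∀ c : ZMod p, ∑ j ∈ Finset.range k, (χ₀ ^ (n * j)) c
      = if P c then (k : ℂ) else 0 := by
    intro c
    by_cases hc : IsUnit c
    · obtain ⟨a, rfl⟩ := hc
      have hterm : ∀ j, (χ₀ ^ (n * j)) (a : ZMod p) = ((χ₀ (a : ZMod p)) ^ n) ^ j := by
        intro j
        rw [MulChar.pow_apply_coe, pow_mul]
      by_cases haH : a ∈ H
      · have han : a ^ n = 1 := (aux_memH H hn0 hcard).mp haH
        have hw : (χ₀ (a : ZMod p)) ^ n = 1 := by
          rw [← map_pow, ← Units.val_pow_eq_pow_val, han, Units.val_one, map_one]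
        rw [if_pos ⟨a, haH, rfl⟩]
        simp [hterm, hw]
      · have hw : (χ₀ (a : ZMod p)) ^ n ≠ 1 := by
          intro hww
          apply haH
          have h1 : χ₀ ((a ^ n : (ZMod p)ˣ) : ZMod p) = 1 := by
            rw [Units.val_pow_eq_pow_val, map_pow, hww]
          exact (aux_memH H hn0 hcard).mpr (aux_ker χ₀ hχ₀ h1)
        have hwk : ((χ₀ (a : ZMod p)) ^ n) ^ k = 1 := by
          rw [← pow_mul, ← map_pow, hnk,
            ZMod.pow_card_sub_one_eq_one (a.ne_zero), map_one]
        have hPc : ¬ P (a : ZMod p) := by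
          rintro ⟨b, hbH, hba⟩
          exact haH (Units.ext hba ▸ hbH)
        rw [if_neg hPc]
        calc ∑ j ∈ Finset.range k, (χ₀ ^ (n * j)) (a : ZMod p)
            = ∑ j ∈ Finset.range k, ((χ₀ (a : ZMod p)) ^ n) ^ j :=
              Finset.sum_congr rfl fun j _ => hterm j
          _ = (((χ₀ (a : ZMod p)) ^ n) ^ k - 1) / ((χ₀ (a : ZMod p)) ^ n - 1) :=
              geom_sum_eq hw k
          _ = 0 := by rw [hwk]; simp
    · have hPc : ¬ P c := by rintro ⟨a, _, rfl⟩; exact hc a.isUnit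
      rw [if_neg hPc]
      exact Finset.sum_eq_zero fun j _ => MulChar.map_nonunit _ hc
  set T : ℕ × ℕ → ℂ := fun j => ∑ z : ZMod p × ZMod p,
      if u' * z.1 + v' * z.2 = x then (χ₀ ^ (n * j.1)) z.1 * (χ₀ ^ (n * j.2)) z.2 else 0
    with hT
  set D : Finset (ZMod p × ZMod p) :=
      Finset.univ.filter (fun z => P z.1 ∧ P z.2 ∧ u' * z.1 + v' * z.2 = x) with hD
  have hA : ∑ j ∈ Finset.range k ×ˢ Finset.range k, T j = (D.card : ℂ) * (k : ℂ) ^ 2 := by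
    simp only [hT]
    rw [Finset.sum_comm]
    have hinner : ∀ z : ZMod p × ZMod p,
        (∑ j ∈ Finset.range k ×ˢ Finset.range k,
          if u' * z.1 + v' * z.2 = x then (χ₀ ^ (n * j.1)) z.1 * (χ₀ ^ (n * j.2)) z.2 else 0)
        = if P z.1 ∧ P z.2 ∧ u' * z.1 + v' * z.2 = x then (k : ℂ) ^ 2 else 0 := by
      intro z
      by_cases hcz : u' * z.1 + v' * z.2 = x
      · simp only [if_pos hcz]
        rw [Finset.sum_product]
        simp only [Prod.fst, Prod.snd]
        rw [← Finset.sum_mul_sum, hInd z.1, hInd z.2]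
        by_cases h1 : P z.1 <;> by_cases h2 : P z.2 <;>
          simp [h1, h2, hcz] <;> ring
      · simp [hcz]
    rw [Finset.sum_congr rfl fun z _ => hinner z]
    rw [← Finset.sum_filter, ← hD, Finset.sum_const, nsmul_eq_mul]
  have hTj : ∀ j : ℕ × ℕ, T j = ((χ₀ ^ (n * j.1)) u')⁻¹ * ((χ₀ ^ (n * j.2)) v')⁻¹ *
      ((χ₀ ^ (n * j.1) * χ₀ ^ (n * j.2)) x) * jacobiSum (χ₀ ^ (n * j.1)) (χ₀ ^ (n * j.2)) := by
    intro j
    simp only [hT]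
    rw [Fintype.sum_prod_type]
    exact aux_T _ _ hu0 hv0 hx
  have hTbound : ∀ j ∈ (Finset.range k ×ˢ Finset.range k).erase (0, 0),
      ‖T j‖ ≤ Real.sqrt p := by
    intro j hj
    obtain ⟨hjne, hjmem⟩ := Finset.mem_erase.mp hj
    rw [Finset.mem_product, Finset.mem_range, Finset.mem_range] at hjmem
    have hnot : ¬(χ₀ ^ (n * j.1) = 1 ∧ χ₀ ^ (n * j.2) = 1) := by
      rintro ⟨h1, h2⟩
      rw [htriv] at h1 h2
      exact hjne (Prod.ext (Nat.eq_zero_of_dvd_of_lt h1 hjmem.1)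
        (Nat.eq_zero_of_dvd_of_lt h2 hjmem.2))
    rw [hTj j, norm_mul, norm_mul, norm_mul, norm_inv, norm_inv,
      aux_norm_one _ hu0, aux_norm_one _ hv0, aux_norm_one _ hx]
    simpa using aux_jacobi_norm_le _ _ hnot
  have hT00 : T (0, 0) = (p : ℂ) - 2 := by
    rw [hTj (0, 0)]
    simp only [Nat.mul_zero, pow_zero, mul_one]
    rw [jacobiSum_one_one, ZMod.card]
    have h1u : (1 : MulChar (ZMod p) ℂ) u' = 1 := by
      rw [← MulChar.one_apply_coe (hu0.isUnit.unit)]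
      congr 1
    have h1v : (1 : MulChar (ZMod p) ℂ) v' = 1 := by
      rw [← MulChar.one_apply_coe (hv0.isUnit.unit)]
      congr 1
    have h1x : (1 : MulChar (ZMod p) ℂ) x = 1 := by
      rw [← MulChar.one_apply_coe (hx.isUnit.unit)]
      congr 1
    rw [h1u, h1v, h1x]
    ring
  by_contra hcon
  push_neg at hcon
  have hD0 : D = ∅ := by
    rw [Finset.eq_empty_iff_forall_notMem]
    rintro z hz
    rw [hD, Finset.mem_filter] at hz
    obtain ⟨-, ⟨a, haH, ha⟩, ⟨b, hbH, hb⟩, hc⟩ := hz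
    exact hcon a haH b hbH (by rw [ha, hb]; exact hc)
  have hsum0 : ∑ j ∈ Finset.range k ×ˢ Finset.range k, T j = 0 := by
    rw [hA, hD0]; simp
  have hmem00 : ((0, 0) : ℕ × ℕ) ∈ Finset.range k ×ˢ Finset.range k := by
    exact Finset.mem_product.mpr ⟨Finset.mem_range.mpr hk1, Finset.mem_range.mpr hk1⟩
  have hsplit : T (0, 0) = - ∑ j ∈ (Finset.range k ×ˢ Finset.range k).erase (0, 0), T j := by
    have h := Finset.add_sum_erase _ T hmem00
    rw [hsum0] at h
    linear_combination h
  have hnorm : ‖T (0, 0)‖ ≤ ((k * k - 1 : ℕ) : ℝ) * Real.sqrt p := by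
    rw [hsplit, norm_neg]
    refine le_trans (norm_sum_le _ _) ?_
    refine le_trans (Finset.sum_le_card_nsmul _ _ _ hTbound) ?_
    rw [Finset.card_erase_of_mem hmem00, Finset.card_product, Finset.card_range,
      nsmul_eq_mul]
  have hTnorm : ‖T (0, 0)‖ = (p : ℝ) - 2 := by
    rw [hT00, show ((p : ℂ) - 2) = (((p : ℝ) - 2 : ℝ) : ℂ) by push_cast; ring,
      Complex.norm_real]
    have h2p : (2 : ℝ) ≤ p := by exact_mod_cast hp2
    rw [Real.norm_eq_abs, _root_.abs_of_nonneg (by linarith)]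
  have hpk : 2 * k + 1 ≤ p := by
    have h2k : 2 * k ≤ n * k := Nat.mul_le_mul_right k hn
    omega
  have hineq := aux_ineq hk1 hp hpk
  rw [hTnorm] at hnorm
  linarith
end
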